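/- arXiv:2106.00975 — 4 statements merged into one kernel-verified Lean document; each statement's English description precedes it below -/
import Mathlib

section
/- If $\mathcal{X}$ is a truncation quasi-greedy basis of a Banach space $\mathbb{X}$ and $\mathbb{X}^*$ is a GT space, then $\mathcal{X}$ is equivalent to the unit vector basis of $c_0$. -/
open Finset Set
open scoped ENNReal NNReal

noncomputable section

instance : Fact ((1 : ℝ≥0∞) ≤ 2) := ⟨one_le_two⟩

/-- A (Schauder-type) basis of a Banach space: a norm-bounded biorthogonal system
`(e, c)` whose linear span is dense. -/
structure BBasis (X : Type*) [NormedAddCommGroup X] [NormedSpace ℝ X] where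
  e : ℕ → X
  c : ℕ → X →L[ℝ] ℝ
  biorth : ∀ m n, c m (e n) = if m = n then (1 : ℝ) else 0
  e_bdd : ∃ M, ∀ n, ‖e n‖ ≤ M
  c_bdd : ∃ M, ∀ n, ‖c n‖ ≤ M
  dense_span : Dense (Submodule.span ℝ (Set.range e) : Set X)

namespace BBasis

variable {X : Type*} [NormedAddCommGroup X] [NormedSpace ℝ X] (B : BBasis X)

/-- Coordinate projection on a finite set `A`. -/
def S (A : Finset ℕ) (f : X) : X := ∑ n ∈ A, B.c n f • B.e n

/-- The set `𝒬` of vectors with coefficients in the unit ball of `ℓ∞`. -/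
def inQ (f : X) : Prop := ∀ n, |B.c n f| ≤ 1

/-- `A` is the set `A(a,f) = {n : |c n f| ≥ a}`. -/
def thrSet (a : ℝ) (f : X) (A : Finset ℕ) : Prop := ∀ n, n ∈ A ↔ a ≤ |B.c n f|

/-- `A` is a greedy set of `f`. -/
def greedySet (f : X) (A : Finset ℕ) : Prop :=
  ∀ n ∈ A, ∀ k, k ∉ A → |B.c k f| ≤ |B.c n f|

/-- The restricted truncation operator associated with a finite set `A`. -/
def R (A : Finset ℕ) (f : X) : X :=
  if h : A.Nonempty then
    (A.inf' h fun n => |B.c n f|) • ∑ n ∈ A, Real.sign (B.c n f) • B.e n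
  else 0

/-- The basis is truncation quasi-greedy. -/
def TruncationQG : Prop :=
  ∃ C : ℝ, ∀ f (A : Finset ℕ), B.greedySet f A → ‖B.R A f‖ ≤ C * ‖f‖

/-- The basis is equivalent to the unit vector basis of `c₀`. -/
def EquivC0 : Prop :=
  ∃ c C : ℝ, 0 < c ∧ ∀ (A : Finset ℕ) (hA : A.Nonempty) (a : ℕ → ℝ),
    c * (A.sup' hA fun n => |a n|) ≤ ‖∑ n ∈ A, a n • B.e n‖ ∧
    ‖∑ n ∈ A, a n • B.e n‖ ≤ C * (A.sup' hA fun n => |a n|)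

end BBasis

/-- A Banach space `Y` is a GT space: every bounded operator `T : Y → ℓ₂` is
absolutely summing. -/
def IsGTSpace (Y : Type*) [NormedAddCommGroup Y] [NormedSpace ℝ Y] : Prop :=
  ∀ T : Y →L[ℝ] lp (fun _ : ℕ => ℝ) 2, ∃ C : ℝ,
    ∀ (A : Finset ℕ) (g : ℕ → Y) (M : ℝ),
      (∀ ε : ℕ → ℝ, (∀ k ∈ A, |ε k| = 1) → ‖∑ k ∈ A, ε k • g k‖ ≤ M) →
      ∑ k ∈ A, ‖T (g k)‖ ≤ C * M


namespace BBasis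

variable {X : Type*} [NormedAddCommGroup X] [NormedSpace ℝ X]

def SgnOn (σ : ℕ → ℝ) (D : Finset ℕ) : Prop := ∀ n ∈ D, σ n = 1 ∨ σ n = -1

def cube (B : BBasis X) (σ : ℕ → ℝ) (D : Finset ℕ) : X := ∑ n ∈ D, σ n • B.e n

variable (B : BBasis X)

lemma coef_sum (D : Finset ℕ) (a : ℕ → ℝ) (k : ℕ) :
    B.c k (∑ n ∈ D, a n • B.e n) = if k ∈ D then a k else 0 := by
  rw [map_sum]
  have : ∀ n ∈ D, B.c k (a n • B.e n) = if k = n then a n else 0 := by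
    intro n _
    rw [map_smul, B.biorth, smul_eq_mul, mul_ite, mul_one, mul_zero]
  rw [Finset.sum_congr rfl this, Finset.sum_ite_eq]

lemma cube_coef (σ : ℕ → ℝ) (D : Finset ℕ) (k : ℕ) :
    B.c k (cube B σ D) = if k ∈ D then σ k else 0 := coef_sum B D σ k

lemma sgn_abs {σ : ℕ → ℝ} {D : Finset ℕ} (hσ : SgnOn σ D) {n : ℕ} (hn : n ∈ D) :
    |σ n| = 1 := by
  rcases hσ n hn with h | h <;> rw [h] <;> norm_num

lemma norm_cube_pos {σ : ℕ → ℝ} {D : Finset ℕ} (hσ : SgnOn σ D) (hD : D.Nonempty) :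
    0 < ‖cube B σ D‖ := by
  obtain ⟨k, hk⟩ := hD
  have h1 : |B.c k (cube B σ D)| = 1 := by
    rw [cube_coef, if_pos hk]; exact sgn_abs hσ hk
  by_contra h
  push_neg at h
  have : cube B σ D = 0 := by
    have := norm_nonneg (cube B σ D); have : ‖cube B σ D‖ = 0 := le_antisymm h this
    exact norm_eq_zero.mp this
  rw [this, map_zero, abs_zero] at h1; norm_num at h1

lemma cube_norm_le {σ : ℕ → ℝ} {D : Finset ℕ} (hσ : SgnOn σ D)
    {Γe : ℝ} (hΓe : ∀ n, ‖B.e n‖ ≤ Γe) : ‖cube B σ D‖ ≤ D.card * Γe := by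
  calc ‖cube B σ D‖ ≤ ∑ n ∈ D, ‖σ n • B.e n‖ := norm_sum_le _ _
    _ ≤ ∑ n ∈ D, Γe := by
        apply Finset.sum_le_sum
        intro n hn
        rw [norm_smul, Real.norm_eq_abs, sgn_abs hσ hn, one_mul]
        exact hΓe n
    _ = D.card * Γe := by rw [Finset.sum_const, nsmul_eq_mul]

section TQG

variable {C : ℝ} (hC1 : 1 ≤ C)
  (hC : ∀ f (A : Finset ℕ), B.greedySet f A → ‖B.R A f‖ ≤ C * ‖f‖)

include hC1 hC in
/-- Master truncation estimate: if the coefficients of `f` on a greedy set `A` are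
`t * s n` with `s` a sign pattern and `t > 0`, then `t * ‖cube s A‖ ≤ C * ‖f‖`. -/
lemma master {f : X} {A : Finset ℕ} {t : ℝ} {s : ℕ → ℝ} (ht : 0 < t)
    (hs : SgnOn s A) (hcoef : ∀ n ∈ A, B.c n f = t * s n)
    (hgr : B.greedySet f A) :
    t * ‖cube B s A‖ ≤ C * ‖f‖ := by
  rcases A.eq_empty_or_nonempty with rfl | hA
  · simp only [cube, Finset.sum_empty, norm_zero, mul_zero]
    positivity
  · have habs : ∀ n ∈ A, |B.c n f| = t := by
      intro n hn
      rw [hcoef n hn, abs_mul, abs_of_pos ht, sgn_abs hs hn, mul_one]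
    have hinf : (A.inf' hA fun n => |B.c n f|) = t := by
      obtain ⟨n₀, hn₀⟩ := hA
      apply le_antisymm
      · exact le_trans (Finset.inf'_le _ hn₀) (le_of_eq (habs n₀ hn₀))
      · exact Finset.le_inf' _ _ fun n hn => ge_of_eq (habs n hn)
    have hsign : ∀ n ∈ A, Real.sign (B.c n f) = s n := by
      intro n hn
      rw [hcoef n hn]
      rcases hs n hn with h | h
      · rw [h, mul_one]; exact Real.sign_of_pos ht
      · rw [h]; rw [mul_neg_one]
        rw [Real.sign_neg]; rw [Real.sign_of_pos ht]
    have hR : B.R A f = t • cube B s A := by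
      rw [BBasis.R, dif_pos hA, hinf]
      congr 1
      exact Finset.sum_congr rfl fun n hn => by rw [hsign n hn]
    have := hC f A hgr
    rw [hR, norm_smul, Real.norm_eq_abs, abs_of_pos ht] at this
    exact this

include hC1 hC in
/-- Subcube estimate: any subcube of a sign cube has norm at most `C` times bigger. -/
lemma cube_subset {σ : ℕ → ℝ} {D E : Finset ℕ} (hσ : SgnOn σ D) (hE : E ⊆ D) :
    ‖cube B σ E‖ ≤ C * ‖cube B σ D‖ := by
  have h := master B hC1 hC (f := cube B σ D) (A := E) (t := 1) (s := σ) one_pos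
    (fun n hn => hσ n (hE hn))
    (fun n hn => by rw [cube_coef, if_pos (hE hn), one_mul])
    (by
      intro n hn k hk
      rw [cube_coef, cube_coef, if_pos (hE hn)]
      by_cases hkD : k ∈ D
      · rw [if_pos hkD]
        rw [sgn_abs hσ hkD, sgn_abs hσ (hE hn)]
      · rw [if_neg hkD, abs_zero]
        positivity)
  rwa [one_mul] at h

include hC1 hC in
/-- Level set estimate. -/
lemma level_bound {f : X} {r : ℝ} (hr : 0 < r) {Λ : Finset ℕ}
    (hΛ : ∀ n, n ∈ Λ ↔ r ≤ |B.c n f|) :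
    ‖cube B (fun n => Real.sign (B.c n f)) Λ‖ * r ≤ C * ‖f‖ := by
  rcases Λ.eq_empty_or_nonempty with rfl | hne
  · simp only [cube, Finset.sum_empty, norm_zero, zero_mul]
    positivity
  · have hgr : B.greedySet f Λ := by
      intro n hn k hk
      have h1 : r ≤ |B.c n f| := (hΛ n).mp hn
      have h2 : ¬ r ≤ |B.c k f| := fun h => hk ((hΛ k).mpr h)
      push_neg at h2
      exact le_trans h2.le h1
    have hinf : r ≤ Λ.inf' hne fun n => |B.c n f| :=
      Finset.le_inf' _ _ fun n hn => (hΛ n).mp hn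
    have h := hC f Λ hgr
    rw [BBasis.R, dif_pos hne] at h
    rw [norm_smul, Real.norm_eq_abs] at h
    have h0 : 0 < Λ.inf' hne fun n => |B.c n f| := lt_of_lt_of_le hr hinf
    rw [abs_of_pos h0] at h
    calc ‖cube B (fun n => Real.sign (B.c n f)) Λ‖ * r
        ≤ ‖cube B (fun n => Real.sign (B.c n f)) Λ‖ * (Λ.inf' hne fun n => |B.c n f|) := by
          apply mul_le_mul_of_nonneg_left hinf (norm_nonneg _)
      _ = (Λ.inf' hne fun n => |B.c n f|) * ‖∑ n ∈ Λ, Real.sign (B.c n f) • B.e n‖ := by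
          rw [mul_comm]; rfl
      _ ≤ C * ‖f‖ := h

end TQG

end BBasis

namespace BBasis

variable {X : Type*} [NormedAddCommGroup X] [NormedSpace ℝ X] (B : BBasis X)

lemma exists_level_finset {Γc : ℝ} (hΓc : ∀ n, ‖B.c n‖ ≤ Γc) (f : X) {r : ℝ} (hr : 0 < r) :
    ∃ Λ : Finset ℕ, ∀ n, n ∈ Λ ↔ r ≤ |B.c n f| := by
  have hΓc0 : 0 ≤ Γc := le_trans (norm_nonneg _) (hΓc 0)
  set δ : ℝ := r / (2 * (Γc + 1)) with hδdef
  have hδ : 0 < δ := by positivity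
  have hclos : f ∈ closure (Submodule.span ℝ (Set.range B.e) : Set X) := B.dense_span f
  obtain ⟨v, hv_mem, hv_dist⟩ := Metric.mem_closure_iff.mp hclos δ hδ
  obtain ⟨l, hl⟩ := Finsupp.mem_span_range_iff_exists_finsupp.mp hv_mem
  have hcoefv : ∀ n, B.c n v = l n := by
    intro n
    rw [← hl, map_finsuppSum]
    have : ∀ i ∈ l.support, B.c n (l i • B.e i) = if n = i then l i else 0 := by
      intro i _
      rw [map_smul, B.biorth, smul_eq_mul, mul_ite, mul_one, mul_zero]
    rw [Finsupp.sum, Finset.sum_congr rfl this, Finset.sum_ite_eq]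
    by_cases h : n ∈ l.support
    · rw [if_pos h]
    · rw [if_neg h]; exact (Finsupp.notMem_support_iff.mp h).symm
  have hsub : {n : ℕ | r ≤ |B.c n f|} ⊆ ↑l.support := by
    intro n hn
    simp only [Set.mem_setOf_eq] at hn
    have h1 : |B.c n (f - v)| ≤ Γc * δ := by
      calc |B.c n (f - v)| ≤ ‖B.c n‖ * ‖f - v‖ := (B.c n).le_opNorm _
        _ ≤ Γc * δ := by
            apply mul_le_mul (hΓc n) _ (norm_nonneg _) hΓc0
            rw [← dist_eq_norm]; exact hv_dist.le
    have h2 : Γc * δ < r := by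
      have : Γc * δ ≤ (Γc + 1) * δ := by nlinarith
      have h3 : (Γc + 1) * δ = r / 2 := by
        rw [hδdef]; field_simp
      nlinarith
    have h4 : B.c n v ≠ 0 := by
      have : |B.c n f| - |B.c n (f - v)| ≤ |B.c n v| := by
        have := abs_sub_abs_le_abs_sub (B.c n f) (B.c n (f - v))
        have heq : B.c n f - B.c n (f - v) = B.c n v := by
          rw [map_sub]; ring
        rwa [heq] at this
      intro h0
      rw [h0, abs_zero] at this
      nlinarith
    rw [hcoefv n] at h4
    exact Finsupp.mem_support_iff.mpr h4
  have hfin : {n : ℕ | r ≤ |B.c n f|}.Finite := Set.Finite.subset (l.support.finite_toSet) hsub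
  exact ⟨hfin.toFinset, fun n => by simp [Set.Finite.mem_toFinset]⟩

section TQG

variable {C : ℝ} (hC1 : 1 ≤ C)
  (hC : ∀ f (A : Finset ℕ), B.greedySet f A → ‖B.R A f‖ ≤ C * ‖f‖)

include hC1 hC in
/-- Key duality lemma: on a set where `ε k * f' (e k) > 0`, the sum of these values
is controlled by any sign cube norm. -/
lemma dual_mass_le {f' : X →L[ℝ] ℝ} (hf' : ‖f'‖ ≤ 1)
    {E : Finset ℕ} {ε σ : ℕ → ℝ} (hε : SgnOn ε E) (hσ : SgnOn σ E)
    (hb : ∀ k ∈ E, 0 < ε k * f' (B.e k)) :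
    ∑ k ∈ E, ε k * f' (B.e k) ≤ 4 * C * ‖cube B σ E‖ := by
  rcases E.eq_empty_or_nonempty with rfl | hEne
  · simp only [Finset.sum_empty, cube, norm_zero, mul_zero]; exact le_refl 0
  have hC0 : 0 < C := lt_of_lt_of_le one_pos hC1
  set a := ‖cube B σ E‖ with ha_def
  set cε := ‖cube B ε E‖ with hcε_def
  have hpair : ∀ F : Finset ℕ, F ⊆ E → ∑ k ∈ F, ε k * f' (B.e k) ≤ ‖cube B ε F‖ := by
    intro F hF
    have : ∑ k ∈ F, ε k * f' (B.e k) = f' (cube B ε F) := by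
      rw [cube, map_sum]
      exact Finset.sum_congr rfl fun k _ => by rw [map_smul, smul_eq_mul]
    rw [this]
    calc f' (cube B ε F) ≤ |f' (cube B ε F)| := le_abs_self _
      _ ≤ ‖f'‖ * ‖cube B ε F‖ := (f'.le_opNorm _)
      _ ≤ 1 * ‖cube B ε F‖ := by
          apply mul_le_mul_of_nonneg_right hf' (norm_nonneg _)
      _ = ‖cube B ε F‖ := one_mul _
  by_cases hcase : cε ≤ 4 * C * a
  · exact le_trans (hpair E (subset_refl E)) hcase
  push_neg at hcase
  have ha_pos : 0 < a := norm_cube_pos B hσ hEne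
  have hcε_pos : 0 < cε := by nlinarith
  set lam := a / cε with hlam_def
  have hlam_pos : 0 < lam := div_pos ha_pos hcε_pos
  have hlam_le : lam < 1 := by
    rw [hlam_def, div_lt_one hcε_pos]
    nlinarith
  have hlamcε : lam * cε = a := by
    rw [hlam_def]; field_simp
  -- part 1 : E' = matching signs
  have key : ∀ η : ℕ → ℝ, SgnOn η E → (∀ k ∈ E, η k = 1 ∨ η k = -1) →
      True := fun _ _ _ => trivial
  -- v = cube σ E + lam • cube ε E
  have main : ∀ (θ : ℝ), θ = 1 ∨ θ = -1 →
      ∑ k ∈ E.filter (fun k => σ k = θ * ε k), ε k * f' (B.e k) ≤ 2 * C * a := by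
    intro θ hθ
    set E' := E.filter (fun k => σ k = θ * ε k) with hE'def
    set v := ∑ n ∈ E, (σ n + (θ * lam) * ε n) • B.e n with hvdef
    have hcoefv : ∀ k, B.c k v = if k ∈ E then σ k + (θ * lam) * ε k else 0 := by
      intro k; exact coef_sum B E _ k
    have hvnorm : ‖v‖ ≤ 2 * a := by
      have hsplit : v = cube B σ E + (θ * lam) • cube B ε E := by
        rw [hvdef, cube, cube, Finset.smul_sum]
        rw [← Finset.sum_add_distrib]
        exact Finset.sum_congr rfl fun n _ => by rw [add_smul, smul_smul]
      rw [hsplit]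
      calc ‖cube B σ E + (θ * lam) • cube B ε E‖
          ≤ ‖cube B σ E‖ + ‖(θ * lam) • cube B ε E‖ := norm_add_le _ _
        _ = a + |θ * lam| * cε := by rw [norm_smul, Real.norm_eq_abs]
        _ = a + lam * cε := by
            rcases hθ with h | h <;> rw [h] <;>
              simp [abs_of_pos hlam_pos, abs_of_pos, hlam_pos.le] <;> ring
        _ = 2 * a := by rw [hlamcε]; ring
    -- σ k + θ lam ε k = θ ε k (1 + lam)  -- with s := fun k => θ * ε k
    have hmaster := master B hC1 hC (f := v) (A := E') (t := 1 + lam)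
      (s := fun k => θ * ε k)
      (by linarith)
      (by
        intro n hn
        have hnE : n ∈ E := Finset.mem_filter.mp hn |>.1
        rcases hθ with h | h <;> rcases hε n hnE with h' | h' <;>
          simp only [h, h'] <;> norm_num)
      (by
        intro n hn
        obtain ⟨hnE, hnσ⟩ := Finset.mem_filter.mp hn
        rw [hcoefv n, if_pos hnE, hnσ]
        ring)
      (by
        intro n hn k hk
        obtain ⟨hnE, hnσ⟩ := Finset.mem_filter.mp hn
        rw [hcoefv n, if_pos hnE, hnσ, hcoefv k]
        have hval : |θ * ε n + θ * lam * ε n| = 1 + lam := by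
          have : θ * ε n + θ * lam * ε n = (θ * ε n) * (1 + lam) := by ring
          rw [this, abs_mul, abs_of_pos (by linarith : (0:ℝ) < 1 + lam)]
          rcases hθ with h | h <;> rcases hε n hnE with h' | h' <;>
            simp [h, h'] 
        rw [hval]
        by_cases hkE : k ∈ E
        · rw [if_pos hkE]
          calc |σ k + θ * lam * ε k| ≤ |σ k| + |θ * lam * ε k| := abs_add_le _ _
            _ ≤ 1 + lam := by
                rw [sgn_abs hσ hkE]
                have : |θ * lam * ε k| = lam := by
                  rw [abs_mul, abs_mul]
                  rw [sgn_abs hε hkE, abs_of_pos hlam_pos]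
                  rcases hθ with h | h <;> simp [h]
                linarith [this.le, this.ge]
        · rw [if_neg hkE, abs_zero]; linarith)
    -- conclude : (1+lam) ‖cube (θ ε) E'‖ ≤ C ‖v‖ ≤ 2 C a
    have h2 : (1 + lam) * ‖cube B (fun k => θ * ε k) E'‖ ≤ C * (2 * a) := by
      calc (1 + lam) * ‖cube B (fun k => θ * ε k) E'‖ ≤ C * ‖v‖ := hmaster
        _ ≤ C * (2 * a) := by apply mul_le_mul_of_nonneg_left hvnorm hC0.le
    have hcube_eq : ‖cube B (fun k => θ * ε k) E'‖ = ‖cube B ε E'‖ := by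
      rcases hθ with h | h
      · simp [h, cube]
      · have : cube B (fun k => θ * ε k) E' = -cube B ε E' := by
          rw [h, cube, cube, ← Finset.sum_neg_distrib]
          exact Finset.sum_congr rfl fun n _ => by rw [← neg_smul]; ring_nf
        rw [this, norm_neg]
    have h3 : ‖cube B ε E'‖ ≤ 2 * C * a := by
      rw [← hcube_eq]
      nlinarith [norm_nonneg (cube B (fun k => θ * ε k) E'), hlam_pos]
    exact le_trans (hpair E' (Finset.filter_subset _ _)) h3
  -- combine the two parts
  have hsplitE : ∑ k ∈ E, ε k * f' (B.e k) =
      ∑ k ∈ E.filter (fun k => σ k = 1 * ε k), ε k * f' (B.e k)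
      + ∑ k ∈ E.filter (fun k => σ k = (-1) * ε k), ε k * f' (B.e k) := by
    rw [← Finset.sum_filter_add_sum_filter_not E (fun k => σ k = 1 * ε k)]
    congr 1
    apply Finset.sum_congr _ (fun _ _ => rfl)
    apply Finset.filter_congr
    intro k hk
    rcases hσ k hk with h | h <;> rcases hε k hk with h' | h' <;>
      simp [h, h'] <;> norm_num
  rw [hsplitE]
  have p1 := main 1 (Or.inl rfl)
  have p2 := main (-1) (Or.inr rfl)
  linarith

include hC1 hC in
/-- Threshold mass estimate. -/
lemma threshold_mass {Γc : ℝ} (hΓc : ∀ n, ‖B.c n‖ ≤ Γc)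
    {f : X} (hf : ‖f‖ ≤ 1) {f' : X →L[ℝ] ℝ} (hf' : ‖f'‖ ≤ 1)
    {P : Finset ℕ} {ε : ℕ → ℝ} (hε : SgnOn ε P)
    (hb : ∀ k ∈ P, 0 < ε k * f' (B.e k)) {r : ℝ} (hr : 0 < r) :
    ∑ k ∈ P.filter (fun k => r ≤ |B.c k f|), ε k * f' (B.e k) ≤ 4 * C ^ 3 / r := by
  obtain ⟨Λ, hΛ⟩ := exists_level_finset B hΓc f hr
  set σ : ℕ → ℝ := fun n => Real.sign (B.c n f) with hσdef
  set E := P.filter (fun k => r ≤ |B.c k f|) with hEdef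
  have hEP : E ⊆ P := Finset.filter_subset _ _
  have hEΛ : E ⊆ Λ := by
    intro k hk
    exact (hΛ k).mpr (Finset.mem_filter.mp hk).2
  have hσΛ : SgnOn σ Λ := by
    intro n hn
    have h1 : r ≤ |B.c n f| := (hΛ n).mp hn
    have hne : B.c n f ≠ 0 := by
      intro h; rw [h, abs_zero] at h1; linarith
    rcases lt_or_gt_of_ne hne with h | h
    · right; exact Real.sign_of_neg h
    · left; exact Real.sign_of_pos h
  have hσE : SgnOn σ E := fun n hn => hσΛ n (hEΛ hn)
  have hεE : SgnOn ε E := fun n hn => hε n (hEP hn)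
  have hbE : ∀ k ∈ E, 0 < ε k * f' (B.e k) := fun k hk => hb k (hEP hk)
  have step1 : ‖cube B σ Λ‖ ≤ C / r := by
    have := level_bound B hC1 hC hr hΛ
    rw [le_div_iff₀ hr]
    calc ‖cube B σ Λ‖ * r ≤ C * ‖f‖ := this
      _ ≤ C * 1 := by
          apply mul_le_mul_of_nonneg_left hf (by linarith)
      _ = C := mul_one C
  have step2 : ‖cube B σ E‖ ≤ C * (C / r) :=
    le_trans (cube_subset B hC1 hC hσΛ hEΛ) (by
      apply mul_le_mul_of_nonneg_left step1 (by linarith))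
  have step3 := dual_mass_le B hC1 hC hf' hεE hσE hbE
  calc ∑ k ∈ E, ε k * f' (B.e k) ≤ 4 * C * ‖cube B σ E‖ := step3
    _ ≤ 4 * C * (C * (C / r)) := by
        apply mul_le_mul_of_nonneg_left step2 (by linarith)
    _ = 4 * C ^ 3 / r := by field_simp

end TQG

end BBasis

namespace BBasis

/-- Abstract dyadic band summation lemma. -/
lemma band_sum (b x : ℕ → ℝ) (K S₂ : ℝ) (hK : 0 ≤ K) (hS : 0 ≤ S₂) :
    ∀ (I : ℕ) (γ : ℝ) (Q : Finset ℕ), 0 ≤ γ →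
    (∀ k ∈ Q, 0 ≤ b k) → (∀ k ∈ Q, 0 ≤ x k ∧ x k ≤ γ) →
    (∀ r : ℝ, 0 < r → ∑ k ∈ Q.filter (fun k => r ≤ x k), b k ≤ K / r) →
    (∑ k ∈ Q, b k ≤ S₂) →
    ∑ k ∈ Q, b k * x k ≤ 2 * K * I + (2:ℝ)⁻¹ ^ I * γ * S₂ := by
  intro I
  induction I with
  | zero =>
    intro γ Q hγ hb hx _ hS2
    simp only [Nat.cast_zero, mul_zero, zero_add, pow_zero, one_mul]
    calc ∑ k ∈ Q, b k * x k ≤ ∑ k ∈ Q, b k * γ := by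
          apply Finset.sum_le_sum
          intro k hk
          exact mul_le_mul_of_nonneg_left (hx k hk).2 (hb k hk)
      _ = (∑ k ∈ Q, b k) * γ := by rw [← Finset.sum_mul]
      _ ≤ S₂ * γ := mul_le_mul_of_nonneg_right hS2 hγ
      _ = γ * S₂ := mul_comm _ _
  | succ I ih =>
    intro γ Q hγ hb hx hH hS2
    rcases eq_or_lt_of_le hγ with hγ0 | hγpos
    · -- γ = 0 : all x are 0
      have hzero : ∀ k ∈ Q, b k * x k = 0 := by
        intro k hk
        have h1 := (hx k hk).1
        have h2 := (hx k hk).2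
        rw [← hγ0] at h2
        have : x k = 0 := le_antisymm h2 h1
        rw [this, mul_zero]
      rw [Finset.sum_congr rfl hzero, Finset.sum_const, smul_zero]
      have h1 : (0:ℝ) ≤ 2 * K * (I + 1 : ℕ) := by positivity
      have h2 : (0:ℝ) ≤ (2:ℝ)⁻¹ ^ (I+1) * γ * S₂ := by positivity
      linarith
    · have hsplit := Finset.sum_filter_add_sum_filter_not Q (fun k => γ/2 < x k)
        (fun k => b k * x k)
      set Q₁ := Q.filter (fun k => γ/2 < x k) with hQ₁
      set Q₂ := Q.filter (fun k => ¬ γ/2 < x k) with hQ₂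
      have hQ₁sub : Q₁ ⊆ Q := Finset.filter_subset _ _
      have hQ₂sub : Q₂ ⊆ Q := Finset.filter_subset _ _
      have hpart1 : ∑ k ∈ Q₁, b k * x k ≤ 2 * K := by
        have hbQ1 : ∑ k ∈ Q₁, b k ≤ K / (γ/2) := by
          have hsub : Q₁ ⊆ Q.filter (fun k => γ/2 ≤ x k) := by
            intro k hk
            obtain ⟨hkQ, hkx⟩ := Finset.mem_filter.mp hk
            exact Finset.mem_filter.mpr ⟨hkQ, hkx.le⟩
          calc ∑ k ∈ Q₁, b k ≤ ∑ k ∈ Q.filter (fun k => γ/2 ≤ x k), b k := by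
                apply Finset.sum_le_sum_of_subset_of_nonneg hsub
                intro k hk _
                exact hb k (Finset.filter_subset _ _ hk)
            _ ≤ K / (γ/2) := hH (γ/2) (by linarith)
        calc ∑ k ∈ Q₁, b k * x k ≤ ∑ k ∈ Q₁, b k * γ := by
              apply Finset.sum_le_sum
              intro k hk
              exact mul_le_mul_of_nonneg_left (hx k (hQ₁sub hk)).2 (hb k (hQ₁sub hk))
          _ = (∑ k ∈ Q₁, b k) * γ := by rw [← Finset.sum_mul]
          _ ≤ (K / (γ/2)) * γ := by
              apply mul_le_mul_of_nonneg_right hbQ1 hγ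
          _ = 2 * K := by field_simp
      have hpart2 : ∑ k ∈ Q₂, b k * x k ≤ 2 * K * I + (2:ℝ)⁻¹ ^ I * (γ/2) * S₂ := by
        apply ih (γ/2) Q₂ (by linarith)
        · intro k hk; exact hb k (hQ₂sub hk)
        · intro k hk
          obtain ⟨hkQ, hkx⟩ := Finset.mem_filter.mp hk
          push_neg at hkx
          exact ⟨(hx k hkQ).1, hkx⟩
        · intro r hr
          calc ∑ k ∈ Q₂.filter (fun k => r ≤ x k), b k
              ≤ ∑ k ∈ Q.filter (fun k => r ≤ x k), b k := by
                apply Finset.sum_le_sum_of_subset_of_nonneg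
                · intro k hk
                  obtain ⟨hk2, hkx⟩ := Finset.mem_filter.mp hk
                  exact Finset.mem_filter.mpr ⟨hQ₂sub hk2, hkx⟩
                · intro k hk _
                  exact hb k (Finset.filter_subset _ _ hk)
            _ ≤ K / r := hH r hr
        · refine le_trans ?_ hS2
          apply Finset.sum_le_sum_of_subset_of_nonneg hQ₂sub
          intro k hk _; exact hb k hk
      calc ∑ k ∈ Q, b k * x k = ∑ k ∈ Q₁, b k * x k + ∑ k ∈ Q₂, b k * x k := hsplit.symm
        _ ≤ 2 * K + (2 * K * I + (2:ℝ)⁻¹ ^ I * (γ/2) * S₂) := by linarith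
        _ = 2 * K * (I + 1 : ℕ) + (2:ℝ)⁻¹ ^ (I+1) * γ * S₂ := by
            push_cast
            ring

variable {X : Type*} [NormedAddCommGroup X] [NormedSpace ℝ X] (B : BBasis X)

section TQG

variable {C : ℝ} (hC1 : 1 ≤ C)
  (hC : ∀ f (A : Finset ℕ), B.greedySet f A → ‖B.R A f‖ ≤ C * ‖f‖)

include hC1 hC in
lemma core_bound {Γc : ℝ} (hΓc : ∀ n, ‖B.c n‖ ≤ Γc) (hΓc1 : 1 ≤ Γc)
    {f' : X →L[ℝ] ℝ} (hf' : ‖f'‖ ≤ 1)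
    {P : Finset ℕ} {ε : ℕ → ℝ} (hε : SgnOn ε P)
    (hb : ∀ k ∈ P, 0 < ε k * f' (B.e k))
    {S₂ : ℝ} (hS2 : ∑ k ∈ P, ε k * f' (B.e k) ≤ S₂) (hS2' : 0 ≤ S₂)
    (I : ℕ) {f : X} (hf : ‖f‖ ≤ 1) :
    ∑ k ∈ P, (ε k * f' (B.e k)) * |B.c k f| ≤
      2 * (4 * C^3) * I + (2:ℝ)⁻¹ ^ I * Γc * S₂ := by
  apply band_sum (fun k => ε k * f' (B.e k)) (fun k => |B.c k f|) (4 * C^3) S₂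
    (by positivity) hS2' I Γc P (by linarith)
  · intro k hk; exact (hb k hk).le
  · intro k hk
    refine ⟨abs_nonneg _, ?_⟩
    calc |B.c k f| ≤ ‖B.c k‖ * ‖f‖ := (B.c k).le_opNorm f
      _ ≤ Γc * 1 := by
          apply mul_le_mul (hΓc k) hf (norm_nonneg _) (by linarith)
      _ = Γc := mul_one _
  · intro r hr
    have := threshold_mass B hC1 hC hΓc hf hf' hε hb hr
    calc ∑ k ∈ P.filter (fun k => r ≤ |B.c k f|), ε k * f' (B.e k) ≤ 4 * C^3 / r := this
      _ = 4 * C^3 / r := rfl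
  · exact hS2

include hC1 hC in
/-- Bound for the operator norm of sign-perturbed dual sums. -/
lemma dual_op_bound {Γc : ℝ} (hΓc : ∀ n, ‖B.c n‖ ≤ Γc) (hΓc1 : 1 ≤ Γc)
    {f' : X →L[ℝ] ℝ} (hf' : ‖f'‖ ≤ 1)
    {P : Finset ℕ} {ε : ℕ → ℝ} (hε : SgnOn ε P)
    (hb : ∀ k ∈ P, 0 < ε k * f' (B.e k))
    {S₂ : ℝ} (hS2 : ∑ k ∈ P, ε k * f' (B.e k) ≤ S₂) (hS2' : 0 ≤ S₂)
    (I : ℕ)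
    {d : ℕ → ℝ} (hd : ∀ k ∈ P, |d k| ≤ ε k * f' (B.e k)) :
    ‖∑ k ∈ P, d k • B.c k‖ ≤ 2 * (4 * C^3) * I + (2:ℝ)⁻¹ ^ I * Γc * S₂ := by
  set M := 2 * (4 * C^3) * (I:ℝ) + (2:ℝ)⁻¹ ^ I * Γc * S₂ with hM
  have hM0 : 0 ≤ M := by
    have : (0:ℝ) ≤ 2 * (4 * C^3) * (I:ℝ) := by positivity
    have : (0:ℝ) ≤ (2:ℝ)⁻¹ ^ I * Γc * S₂ := by positivity
    positivity
  apply ContinuousLinearMap.opNorm_le_bound _ hM0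
  intro f
  have happ : (∑ k ∈ P, d k • B.c k) f = ∑ k ∈ P, d k * B.c k f := by
    rw [ContinuousLinearMap.sum_apply]
    exact Finset.sum_congr rfl fun k _ => by
      rw [ContinuousLinearMap.smul_apply, smul_eq_mul]
  rw [happ, Real.norm_eq_abs]
  have habs : |∑ k ∈ P, d k * B.c k f| ≤ ∑ k ∈ P, (ε k * f' (B.e k)) * |B.c k f| := by
    calc |∑ k ∈ P, d k * B.c k f| ≤ ∑ k ∈ P, |d k * B.c k f| := Finset.abs_sum_le_sum_abs _ _
      _ ≤ ∑ k ∈ P, (ε k * f' (B.e k)) * |B.c k f| := by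
          apply Finset.sum_le_sum
          intro k hk
          rw [abs_mul]
          exact mul_le_mul_of_nonneg_right (hd k hk) (abs_nonneg _)
  rcases eq_or_ne f 0 with rfl | hf0
  · simp
  · have hfpos : 0 < ‖f‖ := norm_pos_iff.mpr hf0
    set g := ‖f‖⁻¹ • f with hg
    have hgnorm : ‖g‖ = 1 := by
      rw [hg, norm_smul, norm_inv, norm_norm, inv_mul_cancel₀ (ne_of_gt hfpos)]
    have hcore := core_bound B hC1 hC hΓc hΓc1 hf' hε hb hS2 hS2' I (f := g) (le_of_eq hgnorm)
    have hcg : ∀ k, |B.c k g| = ‖f‖⁻¹ * |B.c k f| := by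
      intro k
      rw [hg, map_smul, smul_eq_mul, abs_mul, abs_of_pos (by positivity : (0:ℝ) < ‖f‖⁻¹)]
    have : ∑ k ∈ P, (ε k * f' (B.e k)) * |B.c k f| ≤ M * ‖f‖ := by
      have h2 : ∑ k ∈ P, (ε k * f' (B.e k)) * |B.c k g|
          = ‖f‖⁻¹ * ∑ k ∈ P, (ε k * f' (B.e k)) * |B.c k f| := by
        rw [Finset.mul_sum]
        exact Finset.sum_congr rfl fun k _ => by rw [hcg k]; ring
      rw [h2] at hcore
      calc ∑ k ∈ P, (ε k * f' (B.e k)) * |B.c k f|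
          = ‖f‖ * (‖f‖⁻¹ * ∑ k ∈ P, (ε k * f' (B.e k)) * |B.c k f|) := by
            field_simp
        _ ≤ ‖f‖ * M := by
            apply mul_le_mul_of_nonneg_left hcore hfpos.le
        _ = M * ‖f‖ := mul_comm _ _
    exact le_trans habs this

end TQG

end BBasis

namespace BBasis

variable {X : Type*} [NormedAddCommGroup X] [NormedSpace ℝ X] (B : BBasis X)

section Op

variable (P : ℕ → Finset ℕ) (τ : ℕ → ℝ)

/-- scaled basis-vector array used to build the test operator -/
def wvec (j i : ℕ) : X :=
  if h : i < (P j).card then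
    (((2:ℝ)^(j+1) * τ j)⁻¹) • B.e (((P j).equivFin.symm ⟨i, h⟩ : {x // x ∈ P j}) : ℕ)
  else 0

lemma block_sum_eq (g : X →L[ℝ] ℝ) (j : ℕ) :
    ∑ i ∈ Finset.range (P j).card, (g (wvec B P τ j i))^2
      = (((2:ℝ)^(j+1) * τ j)⁻¹)^2 * ∑ k ∈ P j, (g (B.e k))^2 := by
  rw [← Fin.sum_univ_eq_sum_range (fun i => (g (wvec B P τ j i))^2) (P j).card]
  have h1 : ∀ i : Fin (P j).card, (g (wvec B P τ j i))^2
      = (((2:ℝ)^(j+1) * τ j)⁻¹)^2 * (g (B.e (((P j).equivFin.symm i : {x // x ∈ P j}) : ℕ)))^2 := by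
    intro i
    have : wvec B P τ j i = (((2:ℝ)^(j+1) * τ j)⁻¹) •
        B.e (((P j).equivFin.symm i : {x // x ∈ P j}) : ℕ) := by
      rw [wvec, dif_pos i.isLt]
    rw [this, map_smul, smul_eq_mul, mul_pow]
  rw [Finset.sum_congr rfl (fun i _ => h1 i), ← Finset.mul_sum]
  congr 1
  rw [← Finset.sum_coe_sort (P j) (fun k => (g (B.e k))^2)]
  exact Equiv.sum_comp (P j).equivFin.symm (fun a => (g (B.e (a : ℕ)))^2)

lemma wvec_zero {j i : ℕ} (h : ¬ i < (P j).card) : wvec B P τ j i = 0 := by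
  rw [wvec, dif_neg h]

variable (hτ : ∀ j, 1 ≤ τ j)
  (hsq : ∀ (j : ℕ) (g : X →L[ℝ] ℝ), ∑ k ∈ P j, (g (B.e k))^2 ≤ (τ j)^2 * ‖g‖^2)

include hτ hsq in
lemma block_bound (g : X →L[ℝ] ℝ) (j : ℕ) :
    ∑ i ∈ Finset.range (P j).card, (g (wvec B P τ j i))^2
      ≤ ((4:ℝ)⁻¹)^(j+1) * ‖g‖^2 := by
  rw [block_sum_eq]
  have hτ0 : (0:ℝ) < τ j := lt_of_lt_of_le one_pos (hτ j)
  have h2 : (((2:ℝ)^(j+1) * τ j)⁻¹)^2 * ∑ k ∈ P j, (g (B.e k))^2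
      ≤ (((2:ℝ)^(j+1) * τ j)⁻¹)^2 * ((τ j)^2 * ‖g‖^2) := by
    apply mul_le_mul_of_nonneg_left (hsq j g) (by positivity)
  refine le_trans h2 (le_of_eq ?_)
  have h4 : ((2:ℝ)^(j+1))^2 = (4:ℝ)^(j+1) := by
    rw [← pow_mul, mul_comm (j+1) 2, pow_mul]
    norm_num
  have h2pos : (0:ℝ) < (2:ℝ)^(j+1) := by positivity
  field_simp
  rw [h4, mul_comm ((4:ℝ)^(j+1)) _, mul_assoc, ← mul_pow]; norm_num

/-- The coordinates of the test operator. -/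
def Ffun (g : X →L[ℝ] ℝ) (m : ℕ) : ℝ := g (wvec B P τ (Nat.unpair m).1 (Nat.unpair m).2)

include hτ hsq in
lemma sq_summable (g : X →L[ℝ] ℝ) :
    Summable (fun p : ℕ × ℕ => (g (wvec B P τ p.1 p.2))^2) := by
  set sq : ℕ × ℕ → ℝ := fun p => (g (wvec B P τ p.1 p.2))^2 with hsqdef
  have hnonneg : ∀ p, 0 ≤ sq p := fun p => sq_nonneg _
  have hrows : ∀ j, Summable fun i => sq (j, i) := by
    intro j
    apply summable_of_ne_finset_zero (s := Finset.range (P j).card)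
    intro i hi
    have : wvec B P τ j i = 0 := wvec_zero B P τ (by simpa using hi)
    simp [hsqdef, this]
  apply (summable_prod_of_nonneg hnonneg).mpr
  refine ⟨hrows, ?_⟩
  have hrowsum : ∀ j, ∑' i, sq (j, i) ≤ ((4:ℝ)⁻¹)^(j+1) * ‖g‖^2 := by
    intro j
    have heq : ∑' i, sq (j, i) = ∑ i ∈ Finset.range (P j).card, sq (j, i) := by
      apply tsum_eq_sum
      intro i hi
      have : wvec B P τ j i = 0 := wvec_zero B P τ (by simpa using hi)
      simp [hsqdef, this]
    rw [heq]
    exact block_bound B P τ hτ hsq g j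
  apply Summable.of_nonneg_of_le (fun j => tsum_nonneg (fun i => hnonneg (j, i))) hrowsum
  have : Summable (fun j : ℕ => ((4:ℝ)⁻¹ * ‖g‖^2) * ((4:ℝ)⁻¹)^j) := by
    apply Summable.mul_left
    exact summable_geometric_of_lt_one (by norm_num) (by norm_num)
  apply this.congr
  intro j
  rw [pow_succ]
  ring

include hτ hsq in
lemma Ffun_memℓp (g : X →L[ℝ] ℝ) : Memℓp (Ffun B P τ g) 2 := by
  apply memℓp_gen
  have h2 := (Equiv.summable_iff (f := fun p : ℕ × ℕ => (g (wvec B P τ p.1 p.2))^2)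
    Nat.pairEquiv.symm).mpr (sq_summable B P τ hτ hsq g)
  apply h2.congr
  intro m
  rw [show ((2:ℝ≥0∞).toReal) = 2 from by norm_num, Real.rpow_two, Real.norm_eq_abs, sq_abs]
  rfl

include hτ hsq in
lemma Ffun_tsum_le (g : X →L[ℝ] ℝ) :
    ∑' m, ‖Ffun B P τ g m‖ ^ (2:ℝ≥0∞).toReal ≤ ‖g‖^2 := by
  have hsumm := sq_summable B P τ hτ hsq g
  have hrows : ∀ j, Summable fun i => (g (wvec B P τ j i))^2 := by
    intro j
    apply summable_of_ne_finset_zero (s := Finset.range (P j).card)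
    intro i hi
    have : wvec B P τ j i = 0 := wvec_zero B P τ (by simpa using hi)
    simp [this]
  have step1 : ∑' m, ‖Ffun B P τ g m‖ ^ (2:ℝ≥0∞).toReal
      = ∑' p : ℕ × ℕ, (g (wvec B P τ p.1 p.2))^2 := by
    have h2 := Equiv.tsum_eq (f := fun p : ℕ × ℕ => (g (wvec B P τ p.1 p.2))^2)
      Nat.pairEquiv.symm
    rw [← h2]
    apply tsum_congr
    intro m
    rw [show ((2:ℝ≥0∞).toReal) = 2 from by norm_num, Real.rpow_two, Real.norm_eq_abs, sq_abs]
    rfl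
  rw [step1, Summable.tsum_prod' hsumm (fun b => hrows b)]
  have hrowsum : ∀ j, ∑' i, (g (wvec B P τ j i))^2 ≤ ((4:ℝ)⁻¹)^(j+1) * ‖g‖^2 := by
    intro j
    have heq2 : ∑' i, (g (wvec B P τ j i))^2
        = ∑ i ∈ Finset.range (P j).card, (g (wvec B P τ j i))^2 := by
      apply tsum_eq_sum
      intro i hi
      have : wvec B P τ j i = 0 := wvec_zero B P τ (by simpa using hi)
      simp [this]
    rw [heq2]
    exact block_bound B P τ hτ hsq g j
  have hgeom : Summable (fun j : ℕ => ((4:ℝ)⁻¹)^(j+1) * ‖g‖^2) := by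
    have : Summable (fun j : ℕ => ((4:ℝ)⁻¹ * ‖g‖^2) * ((4:ℝ)⁻¹)^j) := by
      apply Summable.mul_left
      exact summable_geometric_of_lt_one (by norm_num) (by norm_num)
    apply this.congr
    intro j
    rw [pow_succ]; ring
  have hcolsum : Summable fun j => ∑' i, (g (wvec B P τ j i))^2 := by
    apply Summable.of_nonneg_of_le (fun j => tsum_nonneg (fun i => sq_nonneg _)) hrowsum hgeom
  calc ∑' j, ∑' i, (g (wvec B P τ j i))^2 ≤ ∑' j, ((4:ℝ)⁻¹)^(j+1) * ‖g‖^2 :=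
        Summable.tsum_le_tsum hrowsum hcolsum hgeom
    _ = (∑' j, ((4:ℝ)⁻¹)^(j+1)) * ‖g‖^2 := tsum_mul_right
    _ ≤ 1 * ‖g‖^2 := by
        apply mul_le_mul_of_nonneg_right _ (sq_nonneg _)
        have h1 : ∑' j : ℕ, ((4:ℝ)⁻¹)^(j+1) = (4:ℝ)⁻¹ * ∑' j : ℕ, ((4:ℝ)⁻¹)^j := by
          rw [← tsum_mul_left]
          congr 1; funext j; rw [pow_succ]; ring
        rw [h1, tsum_geometric_of_lt_one (by norm_num) (by norm_num)]
        norm_num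
    _ = ‖g‖^2 := one_mul _

include hτ hsq in
lemma exists_T :
    ∃ T : (X →L[ℝ] ℝ) →L[ℝ] lp (fun _ : ℕ => ℝ) 2,
      ∀ (j k : ℕ), k ∈ P j → ∀ g : X →L[ℝ] ℝ,
        ((2:ℝ)^(j+1) * τ j)⁻¹ * |g (B.e k)| ≤ ‖T g‖ := by
  have hmem : ∀ g, Memℓp (Ffun B P τ g) 2 := Ffun_memℓp B P τ hτ hsq
  set Tlin : (X →L[ℝ] ℝ) →ₗ[ℝ] lp (fun _ : ℕ => ℝ) 2 :=
    { toFun := fun g => ⟨Ffun B P τ g, hmem g⟩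
      map_add' := by
        intro g h
        apply lp.ext
        rw [lp.coeFn_add]
        funext m
        show (g + h) (wvec B P τ _ _) = _
        rw [ContinuousLinearMap.add_apply]
        rfl
      map_smul' := by
        intro r g
        apply lp.ext
        rw [lp.coeFn_smul]
        funext m
        show (r • g) (wvec B P τ _ _) = _
        rw [ContinuousLinearMap.smul_apply]
        rfl } with hTlin
  have hbound : ∀ g, ‖Tlin g‖ ≤ 1 * ‖g‖ := by
    intro g
    rw [one_mul]
    have htr : (0:ℝ) < (2:ℝ≥0∞).toReal := by norm_num
    rw [lp.norm_eq_tsum_rpow htr]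
    have hcoe : ∀ m, ‖(Tlin g : ∀ _ : ℕ, ℝ) m‖ = ‖Ffun B P τ g m‖ := fun m => rfl
    have h1 : ∑' m, ‖(Tlin g : ∀ _ : ℕ, ℝ) m‖ ^ (2:ℝ≥0∞).toReal ≤ ‖g‖^2 := by
      have : (fun m => ‖(Tlin g : ∀ _ : ℕ, ℝ) m‖ ^ (2:ℝ≥0∞).toReal)
          = fun m => ‖Ffun B P τ g m‖ ^ (2:ℝ≥0∞).toReal := by
        funext m; rw [hcoe]
      rw [this]
      exact Ffun_tsum_le B P τ hτ hsq g
    have h2 : (0:ℝ) ≤ ∑' m, ‖(Tlin g : ∀ _ : ℕ, ℝ) m‖ ^ (2:ℝ≥0∞).toReal := by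
      apply tsum_nonneg
      intro m
      positivity
    calc (∑' m, ‖(Tlin g : ∀ _ : ℕ, ℝ) m‖ ^ (2:ℝ≥0∞).toReal) ^ (1 / (2:ℝ≥0∞).toReal)
        ≤ (‖g‖^2) ^ (1 / (2:ℝ≥0∞).toReal) := by
          apply Real.rpow_le_rpow h2 h1 (by norm_num)
      _ = ‖g‖ := by
          have htr2 : (2:ℝ≥0∞).toReal = 2 := by norm_num
          rw [htr2]
          rw [← Real.rpow_natCast ‖g‖ 2, ← Real.rpow_mul (norm_nonneg _)]
          norm_num
  set T := Tlin.mkContinuous 1 hbound with hT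
  refine ⟨T, ?_⟩
  intro j k hk g
  set i0 : Fin (P j).card := (P j).equivFin ⟨k, hk⟩ with hi0
  set m0 := Nat.pair j (i0 : ℕ) with hm0
  have hcoord : (T g : ∀ _ : ℕ, ℝ) m0 = ((2:ℝ)^(j+1) * τ j)⁻¹ * g (B.e k) := by
    show Ffun B P τ g m0 = _
    rw [Ffun, hm0, Nat.unpair_pair]
    have hw : wvec B P τ j (i0 : ℕ) = (((2:ℝ)^(j+1) * τ j)⁻¹) • B.e k := by
      rw [wvec, dif_pos i0.isLt]
      congr
      · show (((P j).equivFin.symm ⟨(i0 : ℕ), i0.isLt⟩ : {x // x ∈ P j}) : ℕ) = k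
        have : (⟨(i0 : ℕ), i0.isLt⟩ : Fin (P j).card) = i0 := by
          apply Fin.ext; rfl
        rw [this, hi0, Equiv.symm_apply_apply]
    rw [hw, map_smul, smul_eq_mul]
  have h1 : ‖(T g : ∀ _ : ℕ, ℝ) m0‖ ≤ ‖T g‖ := lp.norm_apply_le_norm two_ne_zero (T g) m0
  rw [hcoord, Real.norm_eq_abs, abs_mul] at h1
  have hβpos : (0:ℝ) < ((2:ℝ)^(j+1) * τ j)⁻¹ := by
    have : (0:ℝ) < τ j := lt_of_lt_of_le one_pos (hτ j)
    positivity
  rwa [abs_of_pos hβpos] at h1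

end Op

end BBasis

namespace BBasis

variable {X : Type*} [NormedAddCommGroup X] [NormedSpace ℝ X] (B : BBasis X)

section Main

variable {C : ℝ} (hC1 : 1 ≤ C)
  (hC : ∀ f (A : Finset ℕ), B.greedySet f A → ‖B.R A f‖ ≤ C * ‖f‖)
  {Γe : ℝ} (hΓe : ∀ n, ‖B.e n‖ ≤ Γe) (hΓe1 : 1 ≤ Γe)
  {Γc : ℝ} (hΓc : ∀ n, ‖B.c n‖ ≤ Γc) (hΓc1 : 1 ≤ Γc)

include hC1 hC hΓe hΓe1 hΓc hΓc1 in
set_option maxHeartbeats 1600000 in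
theorem cube_bound_of_GT (hGT : IsGTSpace (X →L[ℝ] ℝ)) :
    ∃ K₀ : ℝ, ∀ (D : Finset ℕ) (σ : ℕ → ℝ), SgnOn σ D → ‖cube B σ D‖ ≤ K₀ := by
  by_contra hcontra
  push_neg at hcontra
  -- the bad-cube selection
  have hΓe0 : (0:ℝ) < Γe := lt_of_lt_of_le one_pos hΓe1
  have hΓc0 : (0:ℝ) < Γc := lt_of_lt_of_le one_pos hΓc1
  have hC0 : (0:ℝ) < C := lt_of_lt_of_le one_pos hC1
  have hC3 : (1:ℝ) ≤ C^3 := one_le_pow₀ hC1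
  have hKpos : (0:ℝ) < 200 * Γe * Γc * C^3 := by
    have h1 : (0:ℝ) < 200 * Γe := by linarith
    have h2 : (0:ℝ) < 200 * Γe * Γc := mul_pos h1 hΓc0
    exact mul_pos h2 (pow_pos hC0 3)
  have hK1 : (1:ℝ) ≤ 200 * Γe * Γc * C^3 := by
    have h1 : (1:ℝ) ≤ Γe * Γc := by nlinarith
    have h2 : (1:ℝ) ≤ Γe * Γc * C^3 := by nlinarith
    nlinarith
  set Q : ℕ → ℝ := fun j => (j+1 : ℝ) * 2^(j+1) * (200 * Γe * Γc * C^3) with hQdef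
  have hQpos : ∀ j, 0 < Q j := by
    intro j
    have h1 : (0:ℝ) < (j+1 : ℝ) := by positivity
    have h2 : (0:ℝ) < (2:ℝ)^(j+1) := by positivity
    exact mul_pos (mul_pos h1 h2) hKpos
  have hsel : ∀ j : ℕ, ∃ (A : Finset ℕ) (ε : ℕ → ℝ),
      SgnOn ε A ∧ (Q j)^4 < ‖cube B ε A‖ ∧
      (∀ (D : Finset ℕ) (σ : ℕ → ℝ), D.card ≤ A.card → SgnOn σ D →
        ‖cube B σ D‖ ≤ ‖cube B ε A‖ + 1) := by
    intro j
    obtain ⟨D₀, σ₀, hσ₀, hv₀⟩ := hcontra ((Q j)^4 + 1)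
    set SS : Set ℝ := {x : ℝ | ∃ (D : Finset ℕ) (σ : ℕ → ℝ),
      D.card ≤ D₀.card ∧ SgnOn σ D ∧ x = ‖cube B σ D‖} with hSSdef
    have hne : ‖cube B σ₀ D₀‖ ∈ SS := ⟨D₀, σ₀, le_refl _, hσ₀, rfl⟩
    have hbdd : BddAbove SS := by
      refine ⟨D₀.card * Γe, ?_⟩
      rintro x ⟨D, σ, hcard, hσ, rfl⟩
      calc ‖cube B σ D‖ ≤ D.card * Γe := cube_norm_le B hσ hΓe
        _ ≤ D₀.card * Γe := by
            apply mul_le_mul_of_nonneg_right _ (by linarith)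
            exact_mod_cast hcard
    have hS1 : (Q j)^4 + 1 ≤ sSup SS := le_trans hv₀.le (le_csSup hbdd hne)
    have hlt : sSup SS - 1 < sSup SS := by linarith
    obtain ⟨x, hxSS, hx⟩ := exists_lt_of_lt_csSup ⟨_, hne⟩ hlt
    obtain ⟨A, ε, hcard, hε, rfl⟩ := hxSS
    refine ⟨A, ε, hε, by linarith, ?_⟩
    intro D σ hcardD hσ
    have h1 : ‖cube B σ D‖ ≤ sSup SS :=
      le_csSup hbdd ⟨D, σ, le_trans hcardD hcard, hσ, rfl⟩
    linarith
  choose A ε hε hbig hsub using hsel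
  -- the norms
  set s : ℕ → ℝ := fun j => ‖cube B (ε j) (A j)‖ with hsdef
  have hs1 : ∀ j, 1 < s j := by
    intro j
    have h1 : (1:ℝ) ≤ Q j := by
      have h2 : (1:ℝ) ≤ (j+1:ℝ) := by exact_mod_cast Nat.one_le_iff_ne_zero.mpr (Nat.succ_ne_zero j)
      have h3 : (1:ℝ) ≤ (2:ℝ)^(j+1) := one_le_pow₀ (by norm_num)
      have h4 : (1:ℝ) ≤ 200 * Γe * Γc * C^3 := hK1
      calc (1:ℝ) = 1 * 1 * 1 := by norm_num
        _ ≤ (j+1:ℝ) * 2^(j+1) * (200 * Γe * Γc * C^3) := by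
            apply mul_le_mul (mul_le_mul h2 h3 (by norm_num) (by linarith)) h4 (by norm_num)
            positivity
    have : (1:ℝ) ≤ (Q j)^4 := one_le_pow₀ h1
    exact lt_of_le_of_lt this (hbig j)
  have hspos : ∀ j, 0 < s j := fun j => lt_trans one_pos (hs1 j)
  -- the norming functionals
  have hexf : ∀ j, ∃ f' : X →L[ℝ] ℝ, ‖f'‖ = 1 ∧ f' (cube B (ε j) (A j)) = s j := by
    intro j
    have hne : cube B (ε j) (A j) ≠ 0 := by
      intro h
      have := hspos j
      rw [hsdef] at this
      simp only [h, norm_zero] at this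
      exact lt_irrefl 0 this
    obtain ⟨g, hg1, hg2⟩ := exists_dual_vector ℝ (cube B (ε j) (A j)) (norm_ne_zero_iff.mpr hne)
    exact ⟨g, hg1, by exact_mod_cast hg2⟩
  choose f' hf'norm hf'val using hexf
  set b : ℕ → ℕ → ℝ := fun j k => ε j k * f' j (B.e k) with hbdef
  set P : ℕ → Finset ℕ := fun j => (A j).filter (fun k => 0 < b j k) with hPdef
  have hPsubA : ∀ j, P j ⊆ A j := fun j => Finset.filter_subset _ _
  have hbpos : ∀ j, ∀ k ∈ P j, 0 < b j k := by
    intro j k hk; exact (Finset.mem_filter.mp hk).2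
  have hεP : ∀ j, SgnOn (ε j) (P j) := fun j k hk => hε j k (hPsubA j hk)
  -- pairing sums
  have hsumA : ∀ j, ∑ k ∈ A j, b j k = s j := by
    intro j
    rw [← hf'val j]
    rw [cube, map_sum]
    exact Finset.sum_congr rfl fun k _ => by rw [map_smul, smul_eq_mul]
  have hsumP_ge : ∀ j, s j ≤ ∑ k ∈ P j, b j k := by
    intro j
    have hsplit := Finset.sum_filter_add_sum_filter_not (A j) (fun k => 0 < b j k) (b j)
    have hneg : ∑ k ∈ (A j).filter (fun k => ¬ 0 < b j k), b j k ≤ 0 := by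
      apply Finset.sum_nonpos
      intro k hk
      have := (Finset.mem_filter.mp hk).2
      push_neg at this
      exact this
    have := hsumA j
    rw [hPdef]
    linarith [hsplit]
  have hsumP_le : ∀ j, ∑ k ∈ P j, b j k ≤ s j + 1 := by
    intro j
    have h1 : ∑ k ∈ P j, b j k = f' j (cube B (ε j) (P j)) := by
      rw [cube, map_sum]
      exact (Finset.sum_congr rfl fun k _ => by rw [map_smul, smul_eq_mul]).symm
    rw [h1]
    calc f' j (cube B (ε j) (P j)) ≤ |f' j (cube B (ε j) (P j))| := le_abs_self _
      _ ≤ ‖f' j‖ * ‖cube B (ε j) (P j)‖ := (f' j).le_opNorm _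
      _ = ‖cube B (ε j) (P j)‖ := by rw [hf'norm j, one_mul]
      _ ≤ s j + 1 := hsub j (P j) (ε j) (Finset.card_le_card (hPsubA j)) (hεP j)
  -- the τ's and the square-function bound
  set τ : ℕ → ℝ := fun j => Real.sqrt (Γe * (s j + 1)) with hτdef
  have hτarg : ∀ j, 1 ≤ Γe * (s j + 1) := by
    intro j
    have := hspos j
    nlinarith
  have hτ1 : ∀ j, 1 ≤ τ j := by
    intro j
    have h := Real.sqrt_le_sqrt (hτarg j)
    rwa [Real.sqrt_one] at h
  have hτsq : ∀ j, (τ j)^2 = Γe * (s j + 1) := by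
    intro j
    exact Real.sq_sqrt (by linarith [hτarg j])
  have hsq : ∀ (j : ℕ) (g : X →L[ℝ] ℝ), ∑ k ∈ P j, (g (B.e k))^2 ≤ (τ j)^2 * ‖g‖^2 := by
    intro j g
    set σg : ℕ → ℝ := fun n => if 0 ≤ g (B.e n) then 1 else -1 with hσgdef
    have hσgsgn : SgnOn σg (P j) := by
      intro n _
      rw [hσgdef]
      by_cases h : 0 ≤ g (B.e n)
      · left; simp [h]
      · right; simp [h]
    have habs : ∀ n, |g (B.e n)| = σg n * g (B.e n) := by
      intro n
      rw [hσgdef]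
      by_cases h : 0 ≤ g (B.e n)
      · simp [h, abs_of_nonneg h]
      · push_neg at h
        simp [not_le.mpr h, abs_of_neg h]
    have hsum_abs : ∑ k ∈ P j, |g (B.e k)| ≤ ‖g‖ * (s j + 1) := by
      have h1 : ∑ k ∈ P j, |g (B.e k)| = g (cube B σg (P j)) := by
        rw [cube, map_sum]
        exact Finset.sum_congr rfl fun k _ => by
          rw [map_smul, smul_eq_mul, habs k]
      rw [h1]
      calc g (cube B σg (P j)) ≤ |g (cube B σg (P j))| := le_abs_self _
        _ ≤ ‖g‖ * ‖cube B σg (P j)‖ := g.le_opNorm _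
        _ ≤ ‖g‖ * (s j + 1) := by
            apply mul_le_mul_of_nonneg_left _ (norm_nonneg g)
            exact hsub j (P j) σg (Finset.card_le_card (hPsubA j)) hσgsgn
    calc ∑ k ∈ P j, (g (B.e k))^2 ≤ ∑ k ∈ P j, (Γe * ‖g‖) * |g (B.e k)| := by
          apply Finset.sum_le_sum
          intro k _
          rw [sq]
          have h2 : |g (B.e k)| ≤ Γe * ‖g‖ := by
            calc |g (B.e k)| ≤ ‖g‖ * ‖B.e k‖ := g.le_opNorm _
              _ ≤ ‖g‖ * Γe := by
                  apply mul_le_mul_of_nonneg_left (hΓe k) (norm_nonneg g)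
              _ = Γe * ‖g‖ := mul_comm _ _
          calc g (B.e k) * g (B.e k) ≤ |g (B.e k) * g (B.e k)| := le_abs_self _
            _ = |g (B.e k)| * |g (B.e k)| := abs_mul _ _
            _ ≤ (Γe * ‖g‖) * |g (B.e k)| :=
                mul_le_mul_of_nonneg_right h2 (abs_nonneg _)
      _ = (Γe * ‖g‖) * ∑ k ∈ P j, |g (B.e k)| := by rw [Finset.mul_sum]
      _ ≤ (Γe * ‖g‖) * (‖g‖ * (s j + 1)) := by
          apply mul_le_mul_of_nonneg_left hsum_abs (by positivity)
      _ = (τ j)^2 * ‖g‖^2 := by rw [hτsq]; ring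
  -- the operator and GT constant
  obtain ⟨T, hT⟩ := exists_T B P τ hτ1 hsq
  obtain ⟨CG, hCG⟩ := hGT T
  -- per-j chain
  have hIdef : ∀ j : ℕ, True := fun _ => trivial
  have hmain : ∀ j : ℕ, (j+1 : ℝ) < CG := by
    intro j
    set I : ℕ := ⌈Real.logb 2 (s j + 1)⌉₊ with hI
    set M : ℝ := 2 * (4 * C^3) * (I : ℝ) + (2:ℝ)⁻¹^I * Γc * (s j + 1) with hM
    -- GT hypothesis check
    have hGThyp : ∀ ε' : ℕ → ℝ, (∀ k ∈ P j, |ε' k| = 1) →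
        ‖∑ k ∈ P j, ε' k • (b j k • B.c k)‖ ≤ M := by
      intro ε' hε'
      have heq : ∑ k ∈ P j, ε' k • (b j k • B.c k) = ∑ k ∈ P j, (ε' k * b j k) • B.c k := by
        exact Finset.sum_congr rfl fun k _ => by rw [smul_smul]
      rw [heq]
      apply dual_op_bound B hC1 hC hΓc hΓc1 (le_of_eq (hf'norm j)) (hεP j) (hbpos j)
        (hsumP_le j) (by linarith [hspos j]) I
      intro k hk
      rw [abs_mul, hε' k hk, one_mul]
      exact le_of_eq (abs_of_pos (hbpos j k hk))
    have hGTconc := hCG (P j) (fun k => b j k • B.c k) M hGThyp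
    -- lower bound for the sum
    have hlow : (((2:ℝ)^(j+1) * τ j)⁻¹) * s j ≤ ∑ k ∈ P j, ‖T (b j k • B.c k)‖ := by
      have h1 : ∀ k ∈ P j, (((2:ℝ)^(j+1) * τ j)⁻¹) * b j k ≤ ‖T (b j k • B.c k)‖ := by
        intro k hk
        have h2 := hT j k hk (b j k • B.c k)
        have h3 : (b j k • B.c k) (B.e k) = b j k := by
          rw [ContinuousLinearMap.smul_apply, smul_eq_mul, B.biorth, if_pos rfl, mul_one]
        rw [h3, abs_of_pos (hbpos j k hk)] at h2
        exact h2
      calc (((2:ℝ)^(j+1) * τ j)⁻¹) * s j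
          ≤ (((2:ℝ)^(j+1) * τ j)⁻¹) * ∑ k ∈ P j, b j k := by
            apply mul_le_mul_of_nonneg_left (hsumP_ge j)
            have hτ0 : (0:ℝ) < τ j := lt_of_lt_of_le one_pos (hτ1 j)
            exact (inv_pos.mpr (mul_pos (by positivity) hτ0)).le
        _ = ∑ k ∈ P j, (((2:ℝ)^(j+1) * τ j)⁻¹) * b j k := by rw [Finset.mul_sum]
        _ ≤ ∑ k ∈ P j, ‖T (b j k • B.c k)‖ := Finset.sum_le_sum h1
    have hkey : (((2:ℝ)^(j+1) * τ j)⁻¹) * s j ≤ CG * M := le_trans hlow hGTconc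
    -- positivity of CG
    have hMpos : 0 < M := by
      rw [hM]
      have h1 : (0:ℝ) < (2:ℝ)⁻¹^I * Γc * (s j + 1) := by
        have hs := hspos j
        have ha : (0:ℝ) < (2:ℝ)⁻¹^I := by positivity
        have hb : (0:ℝ) < s j + 1 := by linarith
        exact mul_pos (mul_pos ha hΓc0) hb
      have h2 : (0:ℝ) ≤ 2 * (4 * C^3) * (I:ℝ) := by positivity
      linarith
    have hτ0 : (0:ℝ) < τ j := lt_of_lt_of_le one_pos (hτ1 j)
    have h2τpos : (0:ℝ) < (2:ℝ)^(j+1) * τ j := mul_pos (by positivity) hτ0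
    have hβpos : (0:ℝ) < ((2:ℝ)^(j+1) * τ j)⁻¹ := inv_pos.mpr h2τpos
    have hCGpos : 0 < CG := by
      have h1 : (0:ℝ) < (((2:ℝ)^(j+1) * τ j)⁻¹) * s j := mul_pos hβpos (hspos j)
      have hCGM : 0 < CG * M := lt_of_lt_of_le h1 hkey
      by_contra hcon
      push_neg at hcon
      nlinarith [hCGM, hMpos, hcon]
    -- arithmetic: set x = (s j)^{1/4}
    set x : ℝ := Real.sqrt (Real.sqrt (s j)) with hx
    have hx0 : 0 ≤ x := Real.sqrt_nonneg _
    have hx4 : x^4 = s j := by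
      have h1 : x^2 = Real.sqrt (s j) := Real.sq_sqrt (Real.sqrt_nonneg _)
      have h2 : (x^2)^2 = s j := by rw [h1]; exact Real.sq_sqrt (hspos j).le
      calc x^4 = (x^2)^2 := by ring
        _ = s j := h2
    have hx1 : 1 ≤ x := by
      by_contra h
      push_neg at h
      have h4 : x^4 < 1 := pow_lt_one₀ hx0 h (by norm_num)
      rw [hx4] at h4
      linarith [hs1 j]
    -- bound τ j ≤ 2 Γe x^2
    have hτx : τ j ≤ 2 * Γe * x^2 := by
      have h1 : Γe * (s j + 1) ≤ (2 * Γe * x^2)^2 := by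
        have h2 : s j + 1 ≤ 2 * s j := by linarith [hs1 j]
        have h3 : Γe * (s j + 1) ≤ 2 * Γe * s j := by nlinarith
        have h4 : (2 * Γe * x^2)^2 = 4 * Γe^2 * x^4 := by ring
        rw [h4, hx4]
        nlinarith [hspos j]
      calc τ j = Real.sqrt (Γe * (s j + 1)) := rfl
        _ ≤ Real.sqrt ((2 * Γe * x^2)^2) := Real.sqrt_le_sqrt h1
        _ = 2 * Γe * x^2 := Real.sqrt_sq (by positivity)
    -- bound I ≤ 11 x
    have hIx : (I : ℝ) ≤ 11 * x := by
      have hlogb : Real.logb 2 (s j + 1) ≤ 2 + 8 * x := by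
        have hlog2 : (1:ℝ)/2 ≤ Real.log 2 := by
          have := Real.log_two_gt_d9
          linarith
        have hlogs : Real.log (s j + 1) ≤ 1 + 4 * x := by
          have h1 : Real.log (s j + 1) ≤ Real.log (2 * s j) := by
            apply Real.log_le_log (by linarith [hspos j])
            linarith [hs1 j]
          have h2 : Real.log (2 * s j) = Real.log 2 + Real.log (s j) := by
            rw [Real.log_mul (by norm_num) (ne_of_gt (hspos j))]
          have h3 : Real.log (s j) = 4 * Real.log x := by
            rw [← hx4, Real.log_pow]
            push_cast
            ring
          have h4 : Real.log x ≤ x := by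
            calc Real.log x ≤ x - 1 := Real.log_le_sub_one_of_pos (by linarith)
              _ ≤ x := by linarith
          have h5 : Real.log 2 ≤ 1 := by
            calc Real.log 2 ≤ 2 - 1 := Real.log_le_sub_one_of_pos (by norm_num)
              _ = 1 := by norm_num
          rw [h2, h3] at h1
          nlinarith
        rw [Real.logb]
        rw [div_le_iff₀ (by linarith)]
        have hlognn : 0 ≤ Real.log (s j + 1) := Real.log_nonneg (by linarith [hspos j])
        nlinarith
      have hceil : (I:ℝ) < Real.logb 2 (s j + 1) + 1 := by
        apply Nat.ceil_lt_add_one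
        apply Real.logb_nonneg (by norm_num)
        linarith [hspos j]
      nlinarith
    -- bound (2⁻¹)^I * (s j + 1) ≤ 1
    have hhalf : (2:ℝ)⁻¹^I * (s j + 1) ≤ 1 := by
      have h1 : Real.logb 2 (s j + 1) ≤ (I : ℝ) := Nat.le_ceil _
      have h2 : s j + 1 ≤ (2:ℝ)^(I:ℝ) := by
        have h3 : (2:ℝ) ^ Real.logb 2 (s j + 1) = s j + 1 :=
          Real.rpow_logb (by norm_num) (by norm_num) (by linarith [hspos j])
        rw [← h3]
        apply Real.rpow_le_rpow_of_exponent_le (by norm_num) h1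
      rw [Real.rpow_natCast] at h2
      have h4 : (2:ℝ)⁻¹^I = ((2:ℝ)^I)⁻¹ := by rw [inv_pow]
      rw [h4]
      have h5 : (0:ℝ) < (2:ℝ)^I := by positivity
      rw [inv_mul_le_iff₀ h5, mul_one]
      exact h2
    -- bound M ≤ 100 C^3 Γc x
    have hMx : M ≤ 100 * C^3 * Γc * x := by
      rw [hM]
      have h1 : (2:ℝ)⁻¹^I * Γc * (s j + 1) ≤ Γc := by
        have h2 : (2:ℝ)⁻¹^I * Γc * (s j + 1) = Γc * ((2:ℝ)⁻¹^I * (s j + 1)) := by ring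
        rw [h2]
        calc Γc * ((2:ℝ)⁻¹^I * (s j + 1)) ≤ Γc * 1 :=
              mul_le_mul_of_nonneg_left hhalf (by linarith)
          _ = Γc := mul_one _
      have h6 : (0:ℝ) ≤ C^3 := by positivity
      have hIx' : 2 * (4 * C^3) * (I:ℝ) ≤ 88 * C^3 * x := by nlinarith [hIx]
      have hcx : (0:ℝ) ≤ C^3 * x := mul_nonneg h6 (by linarith)
      have hC3x : (1:ℝ) ≤ C^3 * x := by nlinarith [hC3, hx1]
      have h7 : Γc ≤ C^3 * Γc * x := by nlinarith [hC3x, hΓc0]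
      have h8 : 88 * C^3 * x ≤ 88 * C^3 * Γc * x := by nlinarith [hcx, hΓc1]
      have h9 : (0:ℝ) ≤ C^3 * Γc * x := mul_nonneg (mul_nonneg h6 hΓc0.le) (by linarith)
      linarith
    -- main chain
    have hkey2 : s j ≤ 2^(j+1) * τ j * (CG * M) := by
      rw [inv_mul_le_iff₀ h2τpos] at hkey
      exact hkey
    have hx2nn : (0:ℝ) ≤ 2 * Γe * x^2 := by
      have : (0:ℝ) ≤ x^2 := sq_nonneg _
      nlinarith
    have hchain : x^4 ≤ 2^(j+1) * (2 * Γe * x^2) * CG * (100 * C^3 * Γc * x) := by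
      rw [hx4]
      have step1 : 2^(j+1) * τ j * (CG * M) ≤ 2^(j+1) * (2 * Γe * x^2) * (CG * M) := by
        apply mul_le_mul_of_nonneg_right _ (mul_nonneg hCGpos.le hMpos.le)
        apply mul_le_mul_of_nonneg_left hτx (by positivity)
      have step2 : 2^(j+1) * (2 * Γe * x^2) * (CG * M)
          ≤ 2^(j+1) * (2 * Γe * x^2) * (CG * (100 * C^3 * Γc * x)) := by
        apply mul_le_mul_of_nonneg_left _ (mul_nonneg (by positivity) hx2nn)
        exact mul_le_mul_of_nonneg_left hMx hCGpos.le
      calc s j ≤ 2^(j+1) * τ j * (CG * M) := hkey2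
        _ ≤ 2^(j+1) * (2 * Γe * x^2) * (CG * M) := step1
        _ ≤ 2^(j+1) * (2 * Γe * x^2) * (CG * (100 * C^3 * Γc * x)) := step2
        _ = 2^(j+1) * (2 * Γe * x^2) * CG * (100 * C^3 * Γc * x) := by ring
    have hxle : x ≤ 2^(j+1) * (200 * Γe * Γc * C^3) * CG := by
      have hx3 : (0:ℝ) < x^3 := by positivity
      have h2 : 2^(j+1) * (2 * Γe * x^2) * CG * (100 * C^3 * Γc * x)
          = (2^(j+1) * (200 * Γe * Γc * C^3) * CG) * x^3 := by ring
      rw [h2] at hchain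
      have h4 : x ≤ 2 ^ (j + 1) * (200 * Γe * Γc * C ^ 3) * CG := by
        by_contra hcon
        push_neg at hcon
        nlinarith
      exact h4
    -- lower bound on x
    have hxgt : Q j < x := by
      have h1 : (Q j)^4 < x^4 := by rw [hx4]; exact hbig j
      by_contra hcon
      push_neg at hcon
      have h2 : x^4 ≤ (Q j)^4 := by
        apply pow_le_pow_left₀ hx0 hcon
      linarith
    -- conclude
    have hQx : (j+1:ℝ) * (2^(j+1) * (200 * Γe * Γc * C^3)) < x := by
      calc (j+1:ℝ) * (2^(j+1) * (200 * Γe * Γc * C^3)) = Q j := by rw [hQdef]; ring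
        _ < x := hxgt
    have hpos2 : (0:ℝ) < 2^(j+1) * (200 * Γe * Γc * C^3) :=
      mul_pos (by positivity) hKpos
    nlinarith [hxle, hQx]
  -- contradiction
  set j₀ : ℕ := ⌈CG⌉₊ with hj₀
  have h1 := hmain j₀
  have h2 : CG ≤ (j₀ : ℝ) := Nat.le_ceil CG
  have h3 : (j₀ : ℝ) ≤ (j₀ + 1 : ℝ) := by linarith
  linarith

end Main

end BBasis

namespace BBasis

variable {X : Type*} [NormedAddCommGroup X] [NormedSpace ℝ X] (B : BBasis X)

lemma sign_cancel {y m : ℝ} (hm : |y| = m) (hy : y ≠ 0) : y - m * Real.sign y = 0 := by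
  rcases lt_or_gt_of_ne hy with h | h
  · rw [Real.sign_of_neg h, abs_of_neg h] at *
    rw [← hm]; ring
  · rw [Real.sign_of_pos h, abs_of_pos h] at *
    rw [← hm]; ring

lemma upper_bound {K₀ : ℝ}
    (hK₀ : ∀ (D : Finset ℕ) (σ : ℕ → ℝ), SgnOn σ D → ‖cube B σ D‖ ≤ K₀) :
    ∀ (D : Finset ℕ) (a : ℕ → ℝ) (t : ℝ), 0 ≤ t → (∀ n ∈ D, |a n| ≤ t) →
      ‖∑ n ∈ D, a n • B.e n‖ ≤ K₀ * t := by
  have hK₀0 : 0 ≤ K₀ := by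
    have h := hK₀ ∅ (fun _ => 1) (fun n hn => absurd hn (Finset.notMem_empty n))
    simpa [cube] using h
  suffices h : ∀ N : ℕ, ∀ (D : Finset ℕ) (a : ℕ → ℝ) (t : ℝ), D.card ≤ N → 0 ≤ t →
      (∀ n ∈ D, |a n| ≤ t) → ‖∑ n ∈ D, a n • B.e n‖ ≤ K₀ * t by
    intro D a t ht ha
    exact h D.card D a t (le_refl _) ht ha
  intro N
  induction N with
  | zero =>
    intro D a t hcard ht _
    have hD : D = ∅ := Finset.card_eq_zero.mp (Nat.le_zero.mp hcard)
    subst hD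
    simp only [Finset.sum_empty, norm_zero]
    positivity
  | succ N ih =>
    intro D a t hcard ht ha
    rcases D.eq_empty_or_nonempty with rfl | hD
    · simp only [Finset.sum_empty, norm_zero]
      positivity
    obtain ⟨k₀, hk₀, hmin⟩ := D.exists_min_image (fun n => |a n|) hD
    have hcard' : (D.erase k₀).card ≤ N := by
      rw [Finset.card_erase_of_mem hk₀]
      omega
    by_cases hm0 : a k₀ = 0
    · have heq : ∑ n ∈ D, a n • B.e n = ∑ n ∈ D.erase k₀, a n • B.e n := by
        rw [← Finset.add_sum_erase D _ hk₀, hm0, zero_smul, zero_add]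
      rw [heq]
      exact ih (D.erase k₀) a t hcard' ht (fun n hn => ha n (Finset.mem_of_mem_erase hn))
    · set m := |a k₀| with hmdef
      have hm : 0 < m := abs_pos.mpr hm0
      set σ : ℕ → ℝ := fun n => Real.sign (a n) with hσdef
      have hane : ∀ n ∈ D, a n ≠ 0 := by
        intro n hn h0
        have := hmin n hn
        rw [h0, abs_zero] at this
        linarith
      have hσD : SgnOn σ D := by
        intro n hn
        rcases lt_or_gt_of_ne (hane n hn) with h | h
        · right; exact Real.sign_of_neg h
        · left; exact Real.sign_of_pos h
      have hsplit : ∑ n ∈ D, a n • B.e n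
          = m • cube B σ D + ∑ n ∈ D, (a n - m * σ n) • B.e n := by
        rw [cube, Finset.smul_sum, ← Finset.sum_add_distrib]
        apply Finset.sum_congr rfl
        intro n _
        rw [smul_smul, ← add_smul]
        congr 1
        ring
      have hzero : a k₀ - m * σ k₀ = 0 := sign_cancel rfl hm0
      have h2 : ∑ n ∈ D, (a n - m * σ n) • B.e n
          = ∑ n ∈ D.erase k₀, (a n - m * σ n) • B.e n := by
        rw [← Finset.add_sum_erase D _ hk₀, hzero, zero_smul, zero_add]
      have htm : 0 ≤ t - m := by
        have := ha k₀ hk₀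
        rw [← hmdef] at this
        linarith
      have hb : ∀ n ∈ D, |a n - m * σ n| ≤ t - m := by
        intro n hn
        have h3 := hmin n hn
        have h4 := ha n hn
        rcases lt_or_gt_of_ne (hane n hn) with h | h
        · rw [hσdef]
          simp only [Real.sign_of_neg h]
          rw [abs_of_neg h] at h3 h4
          rw [abs_of_nonpos (by linarith)]
          linarith
        · rw [hσdef]
          simp only [Real.sign_of_pos h]
          rw [abs_of_pos h] at h3 h4
          rw [abs_of_nonneg (by linarith)]
          linarith
      have hrec := ih (D.erase k₀) (fun n => a n - m * σ n) (t - m) hcard' htm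
        (fun n hn => hb n (Finset.mem_of_mem_erase hn))
      calc ‖∑ n ∈ D, a n • B.e n‖
          = ‖m • cube B σ D + ∑ n ∈ D.erase k₀, (a n - m * σ n) • B.e n‖ := by
            rw [hsplit, h2]
        _ ≤ ‖m • cube B σ D‖ + ‖∑ n ∈ D.erase k₀, (a n - m * σ n) • B.e n‖ := norm_add_le _ _
        _ ≤ m * K₀ + K₀ * (t - m) := by
            apply add_le_add _ hrec
            rw [norm_smul, Real.norm_eq_abs, abs_of_pos hm]
            exact mul_le_mul_of_nonneg_left (hK₀ D σ hσD) hm.le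
        _ = K₀ * t := by ring

end BBasis

theorem stmt9' {X : Type*} [NormedAddCommGroup X] [NormedSpace ℝ X] [CompleteSpace X]
    (B : BBasis X) (htqg : B.TruncationQG) (hGT : IsGTSpace (X →L[ℝ] ℝ)) :
    B.EquivC0 := by
  classical
  obtain ⟨C₀, hC₀⟩ := htqg
  set C : ℝ := max C₀ 1 with hCdef
  have hC1 : (1:ℝ) ≤ C := le_max_right _ _
  have hC : ∀ f (A : Finset ℕ), B.greedySet f A → ‖B.R A f‖ ≤ C * ‖f‖ := by
    intro f A h
    exact le_trans (hC₀ f A h)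
      (mul_le_mul_of_nonneg_right (le_max_left _ _) (norm_nonneg f))
  obtain ⟨Me, hMe⟩ := B.e_bdd
  obtain ⟨Mc, hMc⟩ := B.c_bdd
  set Γe : ℝ := max Me 1 with hΓedef
  set Γc : ℝ := max Mc 1 with hΓcdef
  have hΓe : ∀ n, ‖B.e n‖ ≤ Γe := fun n => le_trans (hMe n) (le_max_left _ _)
  have hΓc : ∀ n, ‖B.c n‖ ≤ Γc := fun n => le_trans (hMc n) (le_max_left _ _)
  have hΓe1 : (1:ℝ) ≤ Γe := le_max_right _ _
  have hΓc1 : (1:ℝ) ≤ Γc := le_max_right _ _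
  have hΓc0 : (0:ℝ) < Γc := lt_of_lt_of_le one_pos hΓc1
  obtain ⟨K₀, hK₀⟩ := BBasis.cube_bound_of_GT B hC1 hC hΓe hΓe1 hΓc hΓc1 hGT
  refine ⟨Γc⁻¹, K₀, inv_pos.mpr hΓc0, ?_⟩
  intro A hA a
  constructor
  · obtain ⟨n₀, hn₀, hsup⟩ := Finset.exists_mem_eq_sup' hA (fun n => |a n|)
    rw [hsup]
    rw [inv_mul_le_iff₀ hΓc0]
    have hcoef : B.c n₀ (∑ n ∈ A, a n • B.e n) = a n₀ := by
      rw [BBasis.coef_sum, if_pos hn₀]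
    calc |a n₀| = |B.c n₀ (∑ n ∈ A, a n • B.e n)| := by rw [hcoef]
      _ ≤ ‖B.c n₀‖ * ‖∑ n ∈ A, a n • B.e n‖ := (B.c n₀).le_opNorm _
      _ ≤ Γc * ‖∑ n ∈ A, a n • B.e n‖ :=
          mul_le_mul_of_nonneg_right (hΓc n₀) (norm_nonneg _)
  · obtain ⟨n₀, hn₀, hsup⟩ := Finset.exists_mem_eq_sup' hA (fun n => |a n|)
    apply BBasis.upper_bound B hK₀
    · rw [hsup] at *
      exact le_trans (abs_nonneg (a n₀)) (le_of_eq rfl)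
    · intro n hn
      exact Finset.le_sup' (fun n => |a n|) hn

/-- a truncation quasi-greedy basis of a Banach space whose dual is a GT
space is equivalent to the unit vector basis of `c₀`. -/
theorem stmt9 {X : Type*} [NormedAddCommGroup X] [NormedSpace ℝ X] [CompleteSpace X]
    (B : BBasis X) (htqg : B.TruncationQG) (hGT : IsGTSpace (X →L[ℝ] ℝ)) :
    B.EquivC0 := by
  exact stmt9' B htqg hGT
end
end

section
/- Let $\mathcal{X}=(x_n)$ be a basis of a $p$-Banach space $\mathbb{X}$, $0<p\le1$, and suppose there exist $0<r<\infty$ and a constant $C$ such that $\|\sum_{n\in A}\varepsilon_n x_n\|\le C|A|^{1/r}$ for every finite $A\subseteq\mathbb{N}$ and all unimodular scalars $(\varepsilon_n)_{n\in A}$. Then the unit vector system of the Lorentz sequence space $\ell_{r,p}$ dominates $\mathcal{X}$: there is a constant $C'$ such that $\|\sum_n a_n x_n\|\le C'\|(a_n)\|_{\ell_{r,p}}$ for all finitely supported sequences $(a_n)$. -/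
/-!
Order the support by decreasing `|a|` and cut it into the dyadic blocks
`2 ^ k ≤ i + 1 < 2 ^ (k + 1)`. Block `k` has at most `2 ^ k` indices and coefficients at most
`a*_{2^k}`. In a `p`-Banach space a bound on all sign sums `∑ ε_n x_n` extends, at the cost of a
factor `(2 ^ p - 1) ^ (-1 / p)`, to all sums `∑ c_n x_n` with `|c_n| ≤ 1`; so the `p`-th power of
block `k` is `≲ (a*_{2^k}) ^ p 2 ^ (k p / r)`. As `a*` is non-increasing, this is dominated by the
Lorentz sum over the previous block, and the `p`-triangle inequality adds up the blocks.
-/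

open Finset Set

/-- A (quasi-)basis of a quasi-Banach space: a quasi-norm `q` with modulus of
concavity `κ`, together with a norm-bounded biorthogonal system `(e, c)`. -/
structure QBasis (X : Type*) [AddCommGroup X] [Module ℝ X] where
  q : X → ℝ
  κ : ℝ
  one_le_κ : 1 ≤ κ
  q_nonneg : ∀ f, 0 ≤ q f
  q_eq_zero_iff : ∀ f, q f = 0 ↔ f = 0
  q_smul : ∀ (t : ℝ) (f : X), q (t • f) = |t| * q f
  q_add : ∀ f g, q (f + g) ≤ κ * (q f + q g)
  e : ℕ → X
  c : ℕ → X →ₗ[ℝ] ℝ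
  biorth : ∀ m n, c m (e n) = if m = n then (1 : ℝ) else 0
  e_bdd : ∃ M, ∀ n, q (e n) ≤ M
  c_bdd : ∃ M, ∀ n f, |c n f| ≤ M * q f

namespace QBasis

variable {X : Type*} [AddCommGroup X] [Module ℝ X] (B : QBasis X)

/-- Coordinate projection on a finite set `A`. -/
noncomputable def S (A : Finset ℕ) (f : X) : X := ∑ n ∈ A, B.c n f • B.e n

/-- The set `𝒬` of vectors with coefficients in the unit ball of `ℓ∞`. -/
def inQ (f : X) : Prop := ∀ n, |B.c n f| ≤ 1

/-- `A` is the set `A(a,f) = {n : |c n f| ≥ a}` of coefficients above the threshold `a`. -/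
def thrSet (a : ℝ) (f : X) (A : Finset ℕ) : Prop := ∀ n, n ∈ A ↔ a ≤ |B.c n f|

/-- `A` is a greedy set of `f`. -/
def greedySet (f : X) (A : Finset ℕ) : Prop :=
  ∀ n ∈ A, ∀ k, k ∉ A → |B.c k f| ≤ |B.c n f|

/-- The restricted truncation operator associated with a finite set `A`:
`R(f,A) = min_{n∈A} |c n f| ∑_{n∈A} sgn (c n f) • e n`. -/
noncomputable def R (A : Finset ℕ) (f : X) : X :=
  if h : A.Nonempty then
    (A.inf' h fun n => |B.c n f|) • ∑ n ∈ A, Real.sign (B.c n f) • B.e n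
  else 0

/-- `lam` is the nearly truncation quasi-greedy function of the basis: for every
`a ∈ (0,1)`, `lam a` is the smallest constant `C` with `q (R^{(a)} f) ≤ C * q f`
for all `f ∈ 𝒬`. -/
def NTQGFun (lam : ℝ → ℝ) : Prop :=
  ∀ a ∈ Set.Ioo (0 : ℝ) 1,
    (∀ f, B.inQ f → ∀ A : Finset ℕ, B.thrSet a f A → B.q (B.R A f) ≤ lam a * B.q f) ∧
    (∀ C : ℝ, (∀ f, B.inQ f → ∀ A : Finset ℕ, B.thrSet a f A → B.q (B.R A f) ≤ C * B.q f) →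
      lam a ≤ C)

/-- The basis is nearly truncation quasi-greedy. -/
def NearlyTQG : Prop :=
  ∀ a ∈ Set.Ioo (0 : ℝ) 1, ∃ C : ℝ,
    ∀ f, B.inQ f → ∀ A : Finset ℕ, B.thrSet a f A → B.q (B.R A f) ≤ C * B.q f

/-- The basis is nearly unconditional. -/
def NearlyUnconditional : Prop :=
  ∀ a ∈ Set.Ioo (0 : ℝ) 1, ∃ C : ℝ,
    ∀ f, B.inQ f → ∀ Aa A : Finset ℕ, B.thrSet a f Aa → A ⊆ Aa → B.q (B.S A f) ≤ C * B.q f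

/-- `phi` is the nearly unconditionality function: `phi a` is the smallest `C` with
`q (S_A f) ≤ C * q f` for `f ∈ 𝒬` and `A ⊆ A(a,f)`. -/
def NUFun (phi : ℝ → ℝ) : Prop :=
  ∀ a ∈ Set.Ioo (0 : ℝ) 1,
    (∀ f, B.inQ f → ∀ Aa A : Finset ℕ, B.thrSet a f Aa → A ⊆ Aa →
      B.q (B.S A f) ≤ phi a * B.q f) ∧
    (∀ C : ℝ, (∀ f, B.inQ f → ∀ Aa A : Finset ℕ, B.thrSet a f Aa → A ⊆ Aa →
      B.q (B.S A f) ≤ C * B.q f) → phi a ≤ C)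

/-- `theta` is the thresholding-boundedness function: `theta a` is the smallest `C` with
`q (S_{A(a,f)} f) ≤ C * q f` for `f ∈ 𝒬`. -/
def ThetaFun (theta : ℝ → ℝ) : Prop :=
  ∀ a ∈ Set.Ioo (0 : ℝ) 1,
    (∀ f, B.inQ f → ∀ A : Finset ℕ, B.thrSet a f A → B.q (B.S A f) ≤ theta a * B.q f) ∧
    (∀ C : ℝ, (∀ f, B.inQ f → ∀ A : Finset ℕ, B.thrSet a f A → B.q (B.S A f) ≤ C * B.q f) →
      theta a ≤ C)

/-- The basis is truncation quasi-greedy: the restricted truncation operators are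
uniformly bounded over greedy sets. -/
def TruncationQG : Prop :=
  ∃ C : ℝ, ∀ f (A : Finset ℕ), B.greedySet f A → B.q (B.R A f) ≤ C * B.q f

end QBasis

theorem Finset.sum_range_sum_Ico_two_pow {M : Type*} [AddCommMonoid M] (f : ℕ → M) (K : ℕ) :
    ∑ k ∈ Finset.range K, ∑ i ∈ Finset.Ico (2 ^ k - 1) (2 ^ (k + 1) - 1), f i =
      ∑ i ∈ Finset.range (2 ^ K - 1), f i := by
  induction K with
  | zero => simp
  | succ K ih =>
    rw [sum_range_succ, ih, sum_range_add_sum_Ico]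
    have := Nat.pow_le_pow_right two_pos K.le_succ
    omega

theorem Antitone.mul_two_pow_rpow_le_sum_Ico {w : ℕ → ℝ} (hw : Antitone w) (hw0 : ∀ i, 0 ≤ w i)
    {s : ℝ} (hs : 0 ≤ s) (k : ℕ) :
    w (2 ^ (k + 1) - 1) * ((2 : ℝ) ^ (k + 1)) ^ s ≤
      2 ^ (1 + s) *
        ∑ i ∈ Finset.Ico (2 ^ k - 1) (2 ^ (k + 1) - 1), w i * ((i : ℝ) + 1) ^ (s - 1) := by
  set L := w (2 ^ (k + 1) - 1) * (((2 : ℝ) ^ k) ^ s / 2 ^ (k + 1))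
  have hterm : ∀ i ∈ Finset.Ico (2 ^ k - 1) (2 ^ (k + 1) - 1),
      L ≤ w i * ((i : ℝ) + 1) ^ (s - 1) := by
    intro i hi
    rw [Finset.mem_Ico] at hi
    have hlow : (2 : ℝ) ^ k ≤ (i : ℝ) + 1 := by
      have := Nat.one_le_two_pow (n := k); exact_mod_cast (by omega : 2 ^ k ≤ i + 1)
    have hhigh : (i : ℝ) + 1 ≤ 2 ^ (k + 1) := by
      exact_mod_cast (by omega : i + 1 ≤ 2 ^ (k + 1))
    rw [Real.rpow_sub_one (by positivity)]
    exact mul_le_mul (hw (by omega)) (by gcongr) (by positivity) (hw0 i)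
  have hcard : (Finset.Ico (2 ^ k - 1) (2 ^ (k + 1) - 1)).card = 2 ^ k := by
    rw [Nat.card_Ico, pow_succ]
    have := Nat.one_le_two_pow (n := k)
    omega
  have hsum := Finset.card_nsmul_le_sum _ _ L hterm
  rw [hcard, nsmul_eq_mul] at hsum
  calc w (2 ^ (k + 1) - 1) * ((2 : ℝ) ^ (k + 1)) ^ s
        = 2 ^ (1 + s) * (((2 ^ k : ℕ) : ℝ) * L) := by
        simp only [L]
        rw [Real.rpow_add two_pos, Real.rpow_one, pow_succ (2 : ℝ),
          Real.mul_rpow (by positivity) zero_le_two]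
        push_cast
        field_simp
    _ ≤ _ := by gcongr

theorem Antitone.sum_range_mul_two_pow_rpow_le {w : ℕ → ℝ} (hw : Antitone w) (hw0 : ∀ i, 0 ≤ w i)
    {s : ℝ} (hs : 0 ≤ s) {K N : ℕ} (hKN : 2 ^ K ≤ N) :
    ∑ k ∈ Finset.range (K + 1), w (2 ^ k - 1) * ((2 : ℝ) ^ k) ^ s ≤
      (1 + 2 ^ (1 + s)) * ∑ i ∈ Finset.range N, w i * ((i : ℝ) + 1) ^ (s - 1) := by
  have hF : ∀ i ∈ Finset.range N, 0 ≤ w i * ((i : ℝ) + 1) ^ (s - 1) :=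
    fun i _ => mul_nonneg (hw0 i) (by positivity)
  have hfirst : w 0 ≤ ∑ i ∈ Finset.range N, w i * ((i : ℝ) + 1) ^ (s - 1) := by
    simpa using Finset.single_le_sum hF (Finset.mem_range.2 ((Nat.two_pow_pos K).trans_le hKN))
  have hblocks : ∑ k ∈ Finset.range K,
      ∑ i ∈ Finset.Ico (2 ^ k - 1) (2 ^ (k + 1) - 1), w i * ((i : ℝ) + 1) ^ (s - 1) ≤
      ∑ i ∈ Finset.range N, w i * ((i : ℝ) + 1) ^ (s - 1) := by
    rw [Finset.sum_range_sum_Ico_two_pow]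
    exact Finset.sum_le_sum_of_subset_of_nonneg (Finset.range_subset_range.2 (by omega))
      fun i hi _ => hF i hi
  rw [Finset.sum_range_succ', add_mul, one_mul, add_comm]
  simp only [pow_zero, Nat.sub_self, Real.one_rpow, mul_one]
  gcongr
  calc ∑ k ∈ Finset.range K, w (2 ^ (k + 1) - 1) * ((2 : ℝ) ^ (k + 1)) ^ s
      ≤ ∑ k ∈ Finset.range K, 2 ^ (1 + s) *
          ∑ i ∈ Finset.Ico (2 ^ k - 1) (2 ^ (k + 1) - 1), w i * ((i : ℝ) + 1) ^ (s - 1) :=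
        Finset.sum_le_sum fun k _ => hw.mul_two_pow_rpow_le_sum_Ico hw0 hs k
    _ ≤ _ := by rw [← Finset.mul_sum]; gcongr

theorem Fin.card_filter_log_two_succ_eq_le (m k : ℕ) :
    (Finset.univ.filter fun i : Fin m => Nat.log 2 (i + 1) = k).card ≤ 2 ^ k := by
  have hmaps : Set.MapsTo (fun i : Fin m => (i : ℕ))
      (Finset.univ.filter fun i : Fin m => Nat.log 2 (i + 1) = k)
      (Finset.Ico (2 ^ k - 1) (2 ^ (k + 1) - 1)) := by
    intro i hi
    simp only [Finset.coe_filter, Finset.mem_univ, true_and] at hi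
    have := (Nat.log_eq_iff (Or.inr ⟨one_lt_two, i.val.succ_ne_zero⟩)).1 hi
    simp only [Finset.coe_Ico, Set.mem_Ico]
    omega
  refine (Finset.card_le_card_of_injOn _ hmaps Fin.val_injective.injOn).trans ?_
  rw [Nat.card_Ico, pow_succ]
  omega

namespace QBasis

variable {X : Type*} [AddCommGroup X] [Module ℝ X] (B : QBasis X) {p : ℝ}

theorem q_zero : B.q 0 = 0 := (B.q_eq_zero_iff 0).2 rfl

theorem q_e_pos (n : ℕ) : 0 < B.q (B.e n) := by
  refine (B.q_nonneg _).lt_of_ne' fun h => ?_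
  have := B.biorth n n
  rw [(B.q_eq_zero_iff _).1 h, map_zero] at this
  simp at this

theorem rpow_q_sum_le (hp : 0 < p) (hpB : ∀ f g, B.q (f + g) ^ p ≤ B.q f ^ p + B.q g ^ p)
    {ι : Type*} (s : Finset ι) (f : ι → X) :
    B.q (∑ i ∈ s, f i) ^ p ≤ ∑ i ∈ s, B.q (f i) ^ p :=
  Finset.le_sum_of_subadditive (fun x => B.q x ^ p)
    (by simp [q_zero, Real.zero_rpow hp.ne']) hpB s f

/- Halving: `c = (β ε + c') / 2` with `ε` the signs of `c` and `|c'| ≤ β` again, so the supremum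
`S` of the left-hand side over `|c| ≤ β` satisfies `2 ^ p S ≤ (β K) ^ p + S`. -/
theorem rpow_q_sum_smul_le_of_signs (hp : 0 < p)
    (hpB : ∀ f g, B.q (f + g) ^ p ≤ B.q f ^ p + B.q g ^ p)
    {ι : Type*} (x : ι → X) (A : Finset ι) {β K : ℝ} (hβ : 0 ≤ β)
    (hK : ∀ ε : ι → ℝ, (∀ i ∈ A, |ε i| = 1) → B.q (∑ i ∈ A, ε i • x i) ≤ K)
    {c : ι → ℝ} (hc : ∀ i ∈ A, |c i| ≤ β) :
    B.q (∑ i ∈ A, c i • x i) ^ p ≤ (β * K) ^ p / (2 ^ p - 1) := by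
  set Q : Set (ι → ℝ) := {c | ∀ i ∈ A, |c i| ≤ β}
  set F : (ι → ℝ) → ℝ := fun c => B.q (∑ i ∈ A, c i • x i) ^ p
  have hK0 : 0 ≤ K := (B.q_nonneg _).trans (hK (fun _ => 1) (by simp))
  have hbdd : BddAbove (F '' Q) := by
    refine ⟨∑ i ∈ A, (β * B.q (x i)) ^ p, ?_⟩
    rintro _ ⟨c, hc, rfl⟩
    refine (B.rpow_q_sum_le hp hpB _ _).trans (Finset.sum_le_sum fun i hi => ?_)
    rw [B.q_smul]
    have := B.q_nonneg (x i)
    gcongr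
    exact hc i hi
  have hstep : ∀ c ∈ Q, F c ≤ ((β * K) ^ p + sSup (F '' Q)) / 2 ^ p := by
    intro c hc
    set ε : ι → ℝ := fun i => if 0 ≤ c i then 1 else -1
    have hsplit : ∑ i ∈ A, c i • x i = (2⁻¹ : ℝ) •
        (β • ∑ i ∈ A, ε i • x i + ∑ i ∈ A, (2 * c i - β * ε i) • x i) := by
      simp only [Finset.smul_sum, ← Finset.sum_add_distrib, smul_smul, ← add_smul]
      refine Finset.sum_congr rfl fun i _ => ?_
      congr 1
      ring
    have hrest : (fun i => 2 * c i - β * ε i) ∈ Q := by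
      intro i hi
      have := abs_le.1 (hc i hi)
      simp only [ε]
      split_ifs <;> rw [abs_le] <;> constructor <;> linarith
    have hsigns : B.q (β • ∑ i ∈ A, ε i • x i) ^ p ≤ (β * K) ^ p := by
      rw [B.q_smul, abs_of_nonneg hβ]
      have := B.q_nonneg (∑ i ∈ A, ε i • x i)
      gcongr
      exact hK ε fun i _ => by simp only [ε]; split_ifs <;> simp
    calc F c
        = B.q (β • ∑ i ∈ A, ε i • x i + ∑ i ∈ A, (2 * c i - β * ε i) • x i) ^ p / 2 ^ p := by
          simp only [F]
          rw [hsplit, B.q_smul, Real.mul_rpow (by norm_num) (B.q_nonneg _),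
            abs_of_pos (by norm_num), Real.inv_rpow (by norm_num), inv_mul_eq_div]
      _ ≤ ((β * K) ^ p + sSup (F '' Q)) / 2 ^ p := by
          gcongr
          exact (hpB _ _).trans (add_le_add hsigns (le_csSup hbdd ⟨_, hrest, rfl⟩))
  have h2p : 0 < (2 : ℝ) ^ p - 1 := by linarith [Real.one_lt_rpow one_lt_two hp]
  have hS : sSup (F '' Q) ≤ ((β * K) ^ p + sSup (F '' Q)) / 2 ^ p :=
    csSup_le ⟨F 0, 0, fun i _ => by simpa using hβ, rfl⟩
      (by rintro _ ⟨c, hc, rfl⟩; exact hstep c hc)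
  rw [le_div_iff₀ (by positivity)] at hS
  rw [le_div_iff₀ h2p]
  nlinarith [le_csSup hbdd ⟨c, hc, rfl⟩]

theorem pos_of_forall_q_sum_le {r C : ℝ}
    (hC : ∀ (A : Finset ℕ) (ε : ℕ → ℝ), (∀ n ∈ A, |ε n| = 1) →
      B.q (∑ n ∈ A, ε n • B.e n) ≤ C * (A.card : ℝ) ^ (1 / r)) : 0 < C :=
  (B.q_e_pos 0).trans_le (by simpa using hC {0} (fun _ => 1) (by simp))

theorem rpow_q_sum_le_of_card_le (hp : 0 < p)
    (hpB : ∀ f g, B.q (f + g) ^ p ≤ B.q f ^ p + B.q g ^ p) {r C : ℝ} (hr : 0 < r)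
    (hC : ∀ (A : Finset ℕ) (ε : ℕ → ℝ), (∀ n ∈ A, |ε n| = 1) →
      B.q (∑ n ∈ A, ε n • B.e n) ≤ C * (A.card : ℝ) ^ (1 / r))
    {ι : Type*} {σ : ι → ℕ} (hσ : Function.Injective σ) (a : ℕ → ℝ) {J : Finset ι}
    {β : ℝ} {N : ℕ} (hβ : 0 ≤ β) (ha : ∀ i ∈ J, |a (σ i)| ≤ β) (hJ : J.card ≤ N) :
    B.q (∑ i ∈ J, a (σ i) • B.e (σ i)) ^ p ≤
      C ^ p / (2 ^ p - 1) * (β ^ p * (N : ℝ) ^ (p / r)) := by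
  classical
  have hC0 := (B.pos_of_forall_q_sum_le hC).le
  rw [← Finset.sum_image (f := fun n => a n • B.e n) hσ.injOn]
  refine (B.rpow_q_sum_smul_le_of_signs hp hpB B.e _ hβ (K := C * (N : ℝ) ^ (1 / r))
    (fun ε hε => (hC _ ε hε).trans ?_) ?_).trans (le_of_eq ?_)
  · gcongr
    exact Finset.card_image_le.trans hJ
  · rintro _ hn
    obtain ⟨i, hi, rfl⟩ := Finset.mem_image.1 hn
    exact ha i hi
  · rw [Real.mul_rpow hβ (by positivity), Real.mul_rpow hC0 (by positivity), ← Real.rpow_mul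
      (by positivity), one_div_mul_eq_div]
    ring

theorem rpow_q_sum_le_lorentz (hp : 0 < p)
    (hpB : ∀ f g, B.q (f + g) ^ p ≤ B.q f ^ p + B.q g ^ p) {r C : ℝ} (hr : 0 < r)
    (hC : ∀ (A : Finset ℕ) (ε : ℕ → ℝ), (∀ n ∈ A, |ε n| = 1) →
      B.q (∑ n ∈ A, ε n • B.e n) ≤ C * (A.card : ℝ) ^ (1 / r))
    {m : ℕ} {σ : Fin m → ℕ} (hσ : Function.Injective σ) (a : ℕ → ℝ)
    (ha : Antitone fun i => |a (σ i)|) :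
    B.q (∑ i : Fin m, a (σ i) • B.e (σ i)) ^ p ≤ C ^ p * (1 + 2 ^ (1 + p / r)) / (2 ^ p - 1) *
      ∑ i : Fin m, |a (σ i)| ^ p * ((i : ℝ) + 1) ^ (p / r - 1) := by
  obtain rfl | hm := Nat.eq_zero_or_pos m
  · simp [q_zero, Real.zero_rpow hp.ne']
  set u : ℕ → ℝ := fun i => if h : i < m then |a (σ ⟨i, h⟩)| else 0
  have hu : Antitone u := by
    intro i j hij
    simp only [u]
    split_ifs with hj hi hi
    · exact ha (Fin.mk_le_mk.2 hij)
    · omega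
    · exact abs_nonneg _
    · rfl
  have hu0 : ∀ i, 0 ≤ u i := fun i => by simp only [u]; split_ifs <;> simp
  have hup : Antitone fun i => u i ^ p := fun i j hij =>
    Real.rpow_le_rpow (hu0 j) (hu hij) hp.le
  set J : ℕ → Finset (Fin m) := fun k =>
    Finset.univ.filter fun i : Fin m => Nat.log 2 (i + 1) = k
  have hblock : ∀ k, B.q (∑ i ∈ J k, a (σ i) • B.e (σ i)) ^ p ≤
      C ^ p / (2 ^ p - 1) * (u (2 ^ k - 1) ^ p * ((2 : ℝ) ^ k) ^ (p / r)) := by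
    intro k
    have hbound := B.rpow_q_sum_le_of_card_le hp hpB hr hC hσ a (hu0 (2 ^ k - 1))
      (fun i hi => ?_) (Fin.card_filter_log_two_succ_eq_le m k)
    · simpa using hbound
    have hi : 2 ^ k ≤ (i : ℕ) + 1 :=
      (Finset.mem_filter.1 hi).2 ▸ Nat.pow_log_le_self 2 i.val.succ_ne_zero
    simpa [u] using hu (show 2 ^ k - 1 ≤ (i : ℕ) by omega)
  have hlog : ∀ i ∈ Finset.univ, Nat.log 2 ((i : Fin m) + 1) ∈ Finset.range (Nat.log 2 m + 1) :=
    fun i _ => Finset.mem_range_succ_iff.2 (Nat.log_mono_right i.isLt)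
  calc B.q (∑ i : Fin m, a (σ i) • B.e (σ i)) ^ p
      = B.q (∑ k ∈ Finset.range (Nat.log 2 m + 1), ∑ i ∈ J k, a (σ i) • B.e (σ i)) ^ p := by
        rw [Finset.sum_fiberwise_of_maps_to hlog]
    _ ≤ ∑ k ∈ Finset.range (Nat.log 2 m + 1), C ^ p / (2 ^ p - 1) *
          (u (2 ^ k - 1) ^ p * ((2 : ℝ) ^ k) ^ (p / r)) :=
        (B.rpow_q_sum_le hp hpB _ _).trans (Finset.sum_le_sum fun k _ => hblock k)
    _ ≤ C ^ p / (2 ^ p - 1) * ((1 + 2 ^ (1 + p / r)) *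
          ∑ i ∈ Finset.range m, u i ^ p * ((i : ℝ) + 1) ^ (p / r - 1)) := by
        rw [← Finset.mul_sum]
        have : 0 < (2 : ℝ) ^ p - 1 := by linarith [Real.one_lt_rpow one_lt_two hp]
        have := (B.pos_of_forall_q_sum_le hC).le
        gcongr
        exact hup.sum_range_mul_two_pow_rpow_le (fun i => by have := hu0 i; positivity)
          (div_pos hp hr).le (Nat.pow_log_le_self 2 hm.ne')
    _ = _ := by
        rw [← Fin.sum_univ_eq_sum_range (fun i => u i ^ p * ((i : ℝ) + 1) ^ (p / r - 1))]
        simp only [u, Fin.is_lt, dif_pos, Fin.eta]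
        ring

end QBasis

theorem stmt10_general {X : Type*} [AddCommGroup X] [Module ℝ X] (B : QBasis X)
    (p : ℝ) (hp0 : 0 < p)
    (hpB : ∀ f g, B.q (f + g) ^ p ≤ B.q f ^ p + B.q g ^ p)
    (r : ℝ) (hr : 0 < r) (C : ℝ)
    (hC : ∀ (A : Finset ℕ) (ε : ℕ → ℝ), (∀ n ∈ A, |ε n| = 1) →
      B.q (∑ n ∈ A, ε n • B.e n) ≤ C * (A.card : ℝ) ^ (1 / r)) :
    ∃ C' : ℝ, 0 < C' ∧ ∀ (m : ℕ) (σ : Fin m → ℕ) (a : ℕ → ℝ),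
      Function.Injective σ →
      (∀ i j : Fin m, i ≤ j → |a (σ j)| ≤ |a (σ i)|) →
      (∀ n : ℕ, a n ≠ 0 → n ∈ Set.range σ) →
      B.q (∑ i : Fin m, a (σ i) • B.e (σ i)) ≤
        C' * (∑ i : Fin m, |a (σ i)| ^ p * ((i : ℝ) + 1) ^ (p / r - 1)) ^ (1 / p) := by
  have hC0 := B.pos_of_forall_q_sum_le hC
  have h2p : 0 < (2 : ℝ) ^ p - 1 := by linarith [Real.one_lt_rpow one_lt_two hp0]
  set K := C ^ p * (1 + 2 ^ (1 + p / r)) / (2 ^ p - 1)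
  have hK : 0 < K := by positivity
  refine ⟨K ^ (1 / p), by positivity, fun m σ a hσ hmono _ => ?_⟩
  have hlorentz : 0 ≤ ∑ i : Fin m, |a (σ i)| ^ p * ((i : ℝ) + 1) ^ (p / r - 1) :=
    Finset.sum_nonneg fun i _ => by positivity
  rw [← Real.mul_rpow hK.le hlorentz, one_div,
    Real.le_rpow_inv_iff_of_pos (B.q_nonneg _) (by positivity) hp0]
  exact B.rpow_q_sum_le_lorentz hp0 hpB hr hC hσ a hmono

/-- if `X` is `p`-Banach, `0 < p ≤ 1`, and
`‖∑_{n∈A} ε_n e_n‖ ≤ C |A|^{1/r}` for all finite `A` and signs `ε`, then the unit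
vector system of the Lorentz space `ℓ_{r,p}` dominates the basis.  The Lorentz
quasi-norm is written using a non-increasing enumeration `σ : Fin m → ℕ` of the
support of the finitely supported sequence `a`. -/
theorem stmt10 {X : Type*} [AddCommGroup X] [Module ℝ X] (B : QBasis X)
    (p : ℝ) (hp0 : 0 < p) (hp1 : p ≤ 1)
    (hpB : ∀ f g, B.q (f + g) ^ p ≤ B.q f ^ p + B.q g ^ p)
    (r : ℝ) (hr : 0 < r) (C : ℝ)
    (hC : ∀ (A : Finset ℕ) (ε : ℕ → ℝ), (∀ n ∈ A, |ε n| = 1) →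
      B.q (∑ n ∈ A, ε n • B.e n) ≤ C * (A.card : ℝ) ^ (1 / r)) :
    ∃ C' : ℝ, 0 < C' ∧ ∀ (m : ℕ) (σ : Fin m → ℕ) (a : ℕ → ℝ),
      Function.Injective σ →
      (∀ i j : Fin m, i ≤ j → |a (σ j)| ≤ |a (σ i)|) →
      (∀ n : ℕ, a n ≠ 0 → n ∈ Set.range σ) →
      B.q (∑ i : Fin m, a (σ i) • B.e (σ i)) ≤
        C' * (∑ i : Fin m, |a (σ i)| ^ p * ((i : ℝ) + 1) ^ (p / r - 1)) ^ (1 / p) :=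
  stmt10_general B p hp0 hpB r hr C hC
end

section
/- Suppose $\mathcal{X}=(x_n)$ is a thresholding-bounded Hilbertian basis of a Banach space $\mathbb{X}$ (i.e., $\|\sum a_n x_n\|\le C(\sum|a_n|^2)^{1/2}$ for all finitely supported $(a_n)$, and the thresholding operators $\mathcal{G}^{(a)}$ are bounded on the unit-coefficient ball for each $a\in(0,1)$). If $\mathbb{X}^*$ is a GT space, then $\mathcal{X}$ is equivalent to the unit vector basis of $c_0$. -/
open Finset Set
open scoped ENNReal NNReal

noncomputable section

namespace BBasis
variable {X : Type*} [NormedAddCommGroup X] [NormedSpace ℝ X] (B : BBasis X)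

/-- coefficient of a finite linear combination -/
lemma c_sum (A : Finset ℕ) (b : ℕ → ℝ) (m : ℕ) :
    B.c m (∑ n ∈ A, b n • B.e n) = if m ∈ A then b m else 0 := by
  rw [map_sum]
  have : ∀ n ∈ A, B.c m (b n • B.e n) = if m = n then b n else 0 := by
    intro n _
    rw [map_smul, smul_eq_mul, B.biorth]
    by_cases h : m = n <;> simp [h]
  rw [Finset.sum_congr rfl this, Finset.sum_ite_eq]

/-- the sign of a coefficient (always ±1) -/
def sg (f : X) (k : ℕ) : ℝ := if 0 ≤ B.c k f then 1 else -1

lemma sg_pm (f : X) (k : ℕ) : B.sg f k = 1 ∨ B.sg f k = -1 := by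
  unfold sg; split <;> simp

lemma abs_sg (f : X) (k : ℕ) : |B.sg f k| = 1 := by
  rcases B.sg_pm f k with h | h <;> simp [h]

lemma sg_mul_abs (f : X) (k : ℕ) : B.sg f k * |B.c k f| = B.c k f := by
  unfold sg
  rcases le_or_gt 0 (B.c k f) with h | h
  · simp [h, abs_of_nonneg h]
  · simp [not_le.2 h, abs_of_neg h]

/-- finiteness of threshold sets -/
lemma thr_finite (f : X) {δ : ℝ} (hδ : 0 < δ) : {n : ℕ | δ ≤ |B.c n f|}.Finite := by
  obtain ⟨M0, hM0⟩ := B.c_bdd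
  set M : ℝ := max M0 0 + 1 with hM
  have hMpos : 0 < M := by positivity
  have hc : ∀ n, ‖B.c n‖ ≤ M := fun n => (hM0 n).trans (by simp [hM]; linarith [le_max_left M0 (0:ℝ)])
  have hf : f ∈ closure (Submodule.span ℝ (Set.range B.e) : Set X) := B.dense_span f
  rw [Metric.mem_closure_iff] at hf
  obtain ⟨p, hp, hdist⟩ := hf (δ / (2 * M)) (by positivity)
  rw [SetLike.mem_coe, Finsupp.mem_span_range_iff_exists_finsupp] at hp
  obtain ⟨μ, hμ⟩ := hp
  apply Set.Finite.subset (μ.support.finite_toSet)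
  intro n hn
  simp only [Set.mem_setOf_eq] at hn
  by_contra hns
  have hcp : B.c n p = 0 := by
    rw [← hμ, map_finsuppSum, Finsupp.sum]
    refine Finset.sum_eq_zero fun i hi => ?_
    rw [map_smul, smul_eq_mul, B.biorth]
    have : n ≠ i := fun h => hns (by exact_mod_cast h ▸ hi)
    simp [this]
  have h1 : |B.c n f| ≤ |B.c n (f - p)| + |B.c n p| := by
    have : B.c n f = B.c n (f - p) + B.c n p := by rw [map_sub]; ring
    rw [this]; exact abs_add_le _ _
  have h2 : |B.c n (f - p)| ≤ M * ‖f - p‖ := by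
    calc |B.c n (f - p)| = ‖B.c n (f - p)‖ := (Real.norm_eq_abs _).symm
    _ ≤ ‖B.c n‖ * ‖f - p‖ := (B.c n).le_opNorm _
    _ ≤ M * ‖f - p‖ := by gcongr; exact hc n
  have h3 : ‖f - p‖ < δ / (2 * M) := by rwa [← dist_eq_norm]
  have hMd : M * (δ / (2 * M)) = δ / 2 := by field_simp
  have h4 : M * ‖f - p‖ < δ / 2 := by
    calc M * ‖f - p‖ < M * (δ / (2 * M)) := by gcongr
    _ = δ / 2 := hMd
  rw [hcp, abs_zero, add_zero] at h1
  have h5 : |B.c n f| < δ / 2 := lt_of_le_of_lt (h1.trans h2) h4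
  linarith

lemma exists_thrSet (f : X) {δ : ℝ} (hδ : 0 < δ) : ∃ A : Finset ℕ, B.thrSet δ f A := by
  refine ⟨(B.thr_finite f hδ).toFinset, fun n => ?_⟩
  simp [Set.Finite.mem_toFinset]

/-- uniform boundedness of thresholding at all levels above a fixed level -/
lemma thr_uniform
    (hThr : ∀ a ∈ Set.Ioo (0 : ℝ) 1, ∃ C : ℝ, ∀ f, B.inQ f →
      ∀ A : Finset ℕ, B.thrSet a f A → ‖B.S A f‖ ≤ C * ‖f‖)
    {a₀ : ℝ} (ha : 0 < a₀) (ha1 : a₀ < 1) :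
    ∃ C : ℝ, 1 ≤ C ∧ ∀ g, B.inQ g → ∀ s, a₀ ≤ s →
      ∀ A : Finset ℕ, B.thrSet s g A → ‖B.S A g‖ ≤ C * ‖g‖ := by
  obtain ⟨C0, hC0⟩ := hThr a₀ ⟨ha, ha1⟩
  refine ⟨max C0 1, le_max_right _ _, fun g hg s hs A hA => ?_⟩
  have hspos : 0 < s := lt_of_lt_of_le ha hs
  set t : ℝ := a₀ / s with htdef
  have htpos : 0 < t := by positivity
  have ht1 : t ≤ 1 := by rw [htdef, div_le_one hspos]; exact hs
  have hginQ : B.inQ (t • g) := by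
    intro n
    rw [map_smul, smul_eq_mul, abs_mul, abs_of_pos htpos]
    calc t * |B.c n g| ≤ 1 * |B.c n g| := by gcongr
    _ ≤ 1 := by rw [one_mul]; exact hg n
  have hthr : B.thrSet a₀ (t • g) A := by
    intro n
    rw [hA n, map_smul, smul_eq_mul, abs_mul, abs_of_pos htpos]
    constructor
    · intro h
      calc a₀ = t * s := by rw [htdef]; field_simp
      _ ≤ t * |B.c n g| := by gcongr
    · intro h
      have : t * s ≤ t * |B.c n g| := by
        calc t * s = a₀ := by rw [htdef]; field_simp
        _ ≤ t * |B.c n g| := h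
      exact le_of_mul_le_mul_left this htpos
  have hkey := hC0 (t • g) hginQ A hthr
  have hS : B.S A (t • g) = t • B.S A g := by
    unfold S
    rw [Finset.smul_sum]
    refine Finset.sum_congr rfl fun n _ => ?_
    rw [map_smul, smul_eq_mul, smul_smul]
  rw [hS, norm_smul, Real.norm_eq_abs, abs_of_pos htpos, norm_smul, Real.norm_eq_abs,
    abs_of_pos htpos] at hkey
  have h2 : ‖B.S A g‖ ≤ C0 * ‖g‖ := le_of_mul_le_mul_left (by linarith [hkey]) htpos
  calc ‖B.S A g‖ ≤ C0 * ‖g‖ := h2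
  _ ≤ max C0 1 * ‖g‖ := by gcongr; exact le_max_left _ _

end BBasis


namespace BBasis
variable {X : Type*} [NormedAddCommGroup X] [NormedSpace ℝ X] (B : BBasis X)

/-- (P1): projection of sign-indicator sums onto subsets, same signs -/
lemma p1
    (hThr : ∀ a ∈ Set.Ioo (0 : ℝ) 1, ∃ C : ℝ, ∀ f, B.inQ f →
      ∀ A : Finset ℕ, B.thrSet a f A → ‖B.S A f‖ ≤ C * ‖f‖) :
    ∃ K : ℝ, 1 ≤ K ∧ ∀ (F G : Finset ℕ) (σ : ℕ → ℝ), (∀ k ∈ F, |σ k| = 1) → G ⊆ F →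
      ‖∑ k ∈ G, σ k • B.e k‖ ≤ K * ‖∑ k ∈ F, σ k • B.e k‖ := by
  obtain ⟨C, hC1, hC⟩ := B.thr_uniform hThr (a₀ := 1/2) (by norm_num) (by norm_num)
  have hCpos : 0 < C := by linarith
  set δ : ℝ := 1 / (4 * C) with hδdef
  have hδpos : 0 < δ := by positivity
  have hδ4 : C * δ = 1/4 := by rw [hδdef]; field_simp
  have hδ1 : δ ≤ 1 := by
    rw [hδdef, div_le_one (by positivity)]; linarith
  refine ⟨2 * C, by linarith, fun F G σ hσ hGF => ?_⟩
  set xF : X := ∑ k ∈ F, σ k • B.e k with hxF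
  set xG : X := ∑ k ∈ G, σ k • B.e k with hxG
  set f' : X := (1 + δ)⁻¹ • (xF + δ • xG) with hf'
  have h1δ : (0:ℝ) < 1 + δ := by linarith
  -- coefficients of f'
  have hcoeff : ∀ m, B.c m f' = (1 + δ)⁻¹ *
      ((if m ∈ F then σ m else 0) + δ * (if m ∈ G then σ m else 0)) := by
    intro m
    rw [hf', map_smul, smul_eq_mul, map_add, map_smul, smul_eq_mul, hxF, hxG,
      B.c_sum, B.c_sum]
  have hcoeffG : ∀ m ∈ G, B.c m f' = σ m := by
    intro m hm
    rw [hcoeff, if_pos (hGF hm), if_pos hm]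
    field_simp
  have hcoeffFG : ∀ m ∈ F, m ∉ G → B.c m f' = (1 + δ)⁻¹ * σ m := by
    intro m hm hm'
    rw [hcoeff, if_pos hm, if_neg hm']
    ring
  have hcoeff0 : ∀ m, m ∉ F → B.c m f' = 0 := by
    intro m hm
    rw [hcoeff, if_neg hm, if_neg (fun h => hm (hGF h))]
    ring
  have hinQ : B.inQ f' := by
    intro m
    by_cases hmG : m ∈ G
    · rw [hcoeffG m hmG, hσ m (hGF hmG)]
    by_cases hmF : m ∈ F
    · rw [hcoeffFG m hmF hmG, abs_mul, hσ m hmF, mul_one, abs_of_pos (by positivity)]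
      rw [inv_le_one_iff₀]; right; linarith
    · rw [hcoeff0 m hmF]; norm_num
  set a' : ℝ := (2 + δ) / (2 * (1 + δ)) with ha'def
  have ha'half : 1/2 ≤ a' := by
    rw [ha'def, le_div_iff₀ (by positivity)]; linarith
  have ha'lt : ∀ m ∈ F, m ∉ G → |B.c m f'| < a' := by
    intro m hm hm'
    rw [hcoeffFG m hm hm', abs_mul, hσ m hm, mul_one, abs_of_pos (by positivity), ha'def,
      inv_eq_one_div, div_lt_div_iff₀ h1δ (by positivity)]
    nlinarith
  have ha'le1 : a' ≤ 1 := by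
    rw [ha'def, div_le_one (by positivity)]; linarith
  have hthr : B.thrSet a' f' G := by
    intro m
    constructor
    · intro hm
      rw [hcoeffG m hm, hσ m (hGF hm)]
      exact ha'le1
    · intro h
      by_contra hm
      by_cases hmF : m ∈ F
      · exact absurd h (not_le.2 (ha'lt m hmF hm))
      · rw [hcoeff0 m hmF] at h
        simp at h
        linarith [ha'half]
  have hSG : B.S G f' = xG := by
    unfold S
    rw [hxG]
    exact Finset.sum_congr rfl fun m hm => by rw [hcoeffG m hm]
  have hnorm := hC f' hinQ a' (by linarith [ha'half]) G hthr
  rw [hSG] at hnorm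
  have hf'norm : ‖f'‖ ≤ ‖xF‖ + δ * ‖xG‖ := by
    rw [hf']
    calc ‖(1 + δ)⁻¹ • (xF + δ • xG)‖ = (1 + δ)⁻¹ * ‖xF + δ • xG‖ := by
          rw [norm_smul, Real.norm_eq_abs, abs_of_pos (by positivity)]
    _ ≤ 1 * ‖xF + δ • xG‖ := by
          gcongr
          rw [inv_le_one_iff₀]; right; linarith
    _ ≤ ‖xF‖ + δ * ‖xG‖ := by
          rw [one_mul]
          calc ‖xF + δ • xG‖ ≤ ‖xF‖ + ‖δ • xG‖ := norm_add_le _ _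
          _ = ‖xF‖ + δ * ‖xG‖ := by rw [norm_smul, Real.norm_eq_abs, abs_of_pos hδpos]
  have hchain : ‖xG‖ ≤ C * ‖xF‖ + 1/4 * ‖xG‖ := by
    calc ‖xG‖ ≤ C * ‖f'‖ := hnorm
    _ ≤ C * (‖xF‖ + δ * ‖xG‖) := by gcongr
    _ = C * ‖xF‖ + C * δ * ‖xG‖ := by ring
    _ = C * ‖xF‖ + 1/4 * ‖xG‖ := by rw [hδ4]
  have : ‖xG‖ ≤ 4/3 * C * ‖xF‖ := by linarith
  calc ‖xG‖ ≤ 4/3 * C * ‖xF‖ := this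
  _ ≤ 2 * C * ‖xF‖ := by
        have : (0:ℝ) ≤ ‖xF‖ := norm_nonneg _
        nlinarith

/-- convexity: coefficients in [-1,1] are dominated by sign patterns -/
lemma conv (D : Finset ℕ) (R : ℝ) (b : ℕ → ℝ) :
    ∀ (v : X), (∀ ε : ℕ → ℝ, (∀ k ∈ D, ε k = 1 ∨ ε k = -1) →
      ‖v + ∑ k ∈ D, ε k • B.e k‖ ≤ R) →
    (∀ k ∈ D, |b k| ≤ 1) → ‖v + ∑ k ∈ D, b k • B.e k‖ ≤ R := by
  induction D using Finset.induction_on with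
  | empty =>
    intro v hpat _
    simpa using hpat (fun _ => 1) (fun k hk => absurd hk (Finset.notMem_empty k))
  | insert n A ha IH =>
    intro v hpat hb
    have hbn : |b n| ≤ 1 := hb n (Finset.mem_insert_self n A)
    set t : ℝ := (b n + 1) / 2 with htdef
    have ht0 : 0 ≤ t := by rw [htdef]; cases abs_le.1 hbn; linarith
    have ht1 : t ≤ 1 := by rw [htdef]; cases abs_le.1 hbn; linarith
    set w : X := ∑ k ∈ A, b k • B.e k with hw
    have key : v + ∑ k ∈ insert n A, b k • B.e k
        = t • ((v + B.e n) + w) + (1 - t) • ((v - B.e n) + w) := by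
      rw [Finset.sum_insert ha]
      have hbn2 : b n = 2 * t - 1 := by rw [htdef]; ring
      rw [hbn2]
      module
    have hpat' : ∀ (s : ℝ), s = 1 ∨ s = -1 →
        ∀ ε : ℕ → ℝ, (∀ k ∈ A, ε k = 1 ∨ ε k = -1) →
        ‖(v + s • B.e n) + ∑ k ∈ A, ε k • B.e k‖ ≤ R := by
      intro s hs ε hε
      have h1 := hpat (Function.update ε n s) (by
        intro k hk
        rcases Finset.mem_insert.1 hk with h | h
        · rw [h, Function.update_self]; exact hs
        · rw [Function.update_of_ne (by rintro rfl; exact ha h)]; exact hε k h)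
      rw [Finset.sum_insert ha, Function.update_self] at h1
      have h2 : ∑ k ∈ A, Function.update ε n s k • B.e k = ∑ k ∈ A, ε k • B.e k :=
        Finset.sum_congr rfl fun k hk => by
          rw [Function.update_of_ne (by rintro rfl; exact ha hk)]
      rw [h2] at h1
      calc ‖(v + s • B.e n) + ∑ k ∈ A, ε k • B.e k‖
          = ‖v + (s • B.e n + ∑ k ∈ A, ε k • B.e k)‖ := by rw [add_assoc]
      _ ≤ R := h1
    have hIH1 : ‖(v + B.e n) + w‖ ≤ R := by
      refine IH (v + B.e n) ?_ (fun k hk => hb k (Finset.mem_insert_of_mem hk))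
      intro ε hε
      have := hpat' 1 (Or.inl rfl) ε hε
      simpa using this
    have hIH2 : ‖(v - B.e n) + w‖ ≤ R := by
      refine IH (v - B.e n) ?_ (fun k hk => hb k (Finset.mem_insert_of_mem hk))
      intro ε hε
      have := hpat' (-1) (Or.inr rfl) ε hε
      have heq : v + (-1 : ℝ) • B.e n = v - B.e n := by module
      rwa [heq] at this
    have hR : 0 ≤ R := le_trans (norm_nonneg _) hIH1
    rw [key]
    calc ‖t • ((v + B.e n) + w) + (1 - t) • ((v - B.e n) + w)‖
        ≤ ‖t • ((v + B.e n) + w)‖ + ‖(1 - t) • ((v - B.e n) + w)‖ := norm_add_le _ _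
    _ = t * ‖(v + B.e n) + w‖ + (1 - t) * ‖(v - B.e n) + w‖ := by
        rw [norm_smul, norm_smul, Real.norm_eq_abs, Real.norm_eq_abs,
          abs_of_nonneg ht0, abs_of_nonneg (by linarith)]
    _ ≤ t * R + (1 - t) * R :=
        add_le_add (mul_le_mul_of_nonneg_left hIH1 ht0)
          (mul_le_mul_of_nonneg_left hIH2 (by linarith))
    _ = R := by ring

/-- multiplier bound: arbitrary coefficients of modulus ≤ 1 vs a fixed sign vector -/
lemma mult_bound
    {K : ℝ} (hK1 : 1 ≤ K)
    (hp1 : ∀ (F G : Finset ℕ) (σ : ℕ → ℝ), (∀ k ∈ F, |σ k| = 1) → G ⊆ F →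
      ‖∑ k ∈ G, σ k • B.e k‖ ≤ K * ‖∑ k ∈ F, σ k • B.e k‖)
    (F : Finset ℕ) (σ : ℕ → ℝ) (hσ : ∀ k ∈ F, |σ k| = 1)
    (b : ℕ → ℝ) (hb : ∀ k ∈ F, |b k| ≤ 1) :
    ‖∑ k ∈ F, b k • B.e k‖ ≤ 2 * K * ‖∑ k ∈ F, σ k • B.e k‖ := by
  classical
  have hpat : ∀ ε : ℕ → ℝ, (∀ k ∈ F, ε k = 1 ∨ ε k = -1) →
      ‖(0:X) + ∑ k ∈ F, ε k • B.e k‖ ≤ 2 * K * ‖∑ k ∈ F, σ k • B.e k‖ := by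
    intro ε hε
    rw [zero_add]
    set G : Finset ℕ := F.filter (fun k => ε k = σ k) with hG
    have hsplit : ∑ k ∈ F, ε k • B.e k
        = ∑ k ∈ G, σ k • B.e k - ∑ k ∈ F \ G, σ k • B.e k := by
      rw [← Finset.sum_sdiff (s₁ := G) (s₂ := F) (f := fun k => ε k • B.e k) (Finset.filter_subset _ F)]
      have e1 : ∑ k ∈ G, ε k • B.e k = ∑ k ∈ G, σ k • B.e k :=
        Finset.sum_congr rfl fun k hk => by
          rw [(Finset.mem_filter.1 hk).2]
      have e2 : ∑ k ∈ F \ G, ε k • B.e k = - ∑ k ∈ F \ G, σ k • B.e k := by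
        rw [← Finset.sum_neg_distrib]
        refine Finset.sum_congr rfl fun k hk => ?_
        obtain ⟨hkF, hkG⟩ := Finset.mem_sdiff.1 hk
        have hne : ε k ≠ σ k := fun h => hkG (Finset.mem_filter.2 ⟨hkF, h⟩)
        have hεk := hε k hkF
        have hσk : σ k = 1 ∨ σ k = -1 := by
          rcases abs_eq (by norm_num : (0:ℝ) ≤ 1) |>.1 (hσ k hkF) with h | h
          · exact Or.inl h
          · exact Or.inr h
        have : ε k = -σ k := by
          rcases hεk with h1 | h1 <;> rcases hσk with h2 | h2 <;>
            simp [h1, h2] at hne ⊢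
        rw [this, neg_smul]
      rw [e2, e1]
      abel
    rw [hsplit]
    calc ‖∑ k ∈ G, σ k • B.e k - ∑ k ∈ F \ G, σ k • B.e k‖
        ≤ ‖∑ k ∈ G, σ k • B.e k‖ + ‖∑ k ∈ F \ G, σ k • B.e k‖ := norm_sub_le _ _
    _ ≤ K * ‖∑ k ∈ F, σ k • B.e k‖ + K * ‖∑ k ∈ F, σ k • B.e k‖ := by
        gcongr
        · exact hp1 F G σ hσ (Finset.filter_subset _ F)
        · exact hp1 F (F \ G) σ hσ (Finset.sdiff_subset)
    _ = 2 * K * ‖∑ k ∈ F, σ k • B.e k‖ := by ring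
  have := B.conv F (2 * K * ‖∑ k ∈ F, σ k • B.e k‖) b 0 hpat hb
  rwa [zero_add] at this

end BBasis


namespace BBasis
variable {X : Type*} [NormedAddCommGroup X] [NormedSpace ℝ X] (B : BBasis X)

/-- (L1): the sign-indicator of a threshold set is controlled by the norm -/
lemma l1
    (hThr : ∀ a ∈ Set.Ioo (0 : ℝ) 1, ∃ C : ℝ, ∀ f, B.inQ f →
      ∀ A : Finset ℕ, B.thrSet a f A → ‖B.S A f‖ ≤ C * ‖f‖)
    {a : ℝ} (ha : 0 < a) (ha1 : a < 1) :
    ∃ K2 : ℝ, 0 ≤ K2 ∧ ∀ g, B.inQ g → ∀ D : Finset ℕ, B.thrSet a g D →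
      ‖∑ k ∈ D, B.sg g k • B.e k‖ ≤ K2 * ‖g‖ := by
  classical
  obtain ⟨C, hC1, hC⟩ := B.thr_uniform hThr ha ha1
  obtain ⟨K, hK1, hp1⟩ := B.p1 hThr
  set N : ℕ := ⌈8 * K / a⌉₊ with hNdef
  have hNR : 8 * K / a ≤ (N : ℝ) := Nat.le_ceil _
  have hNpos : 0 < (N : ℝ) := by
    have : (0:ℝ) < 8 * K / a := by positivity
    linarith
  set Δ : ℝ := (2 - a) / N with hΔdef
  have hΔpos : 0 < Δ := by
    rw [hΔdef]
    apply div_pos (by linarith) hNpos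
  have hhalf : Δ / a * (2 * K) ≤ 1 / 2 := by
    rw [hΔdef]
    rw [div_div, div_mul_eq_mul_div, div_le_div_iff₀ (by positivity) (by norm_num)]
    have h8 : 8 * K ≤ (N:ℝ) * a := by
      rw [div_le_iff₀ ha] at hNR
      linarith
    nlinarith
  set u : ℕ → ℝ := fun i => a + i * Δ with hudef
  have hua : ∀ i, a ≤ u i := by
    intro i
    rw [hudef]
    have : (0:ℝ) ≤ i * Δ := by positivity
    simp only []
    linarith
  have hupos : ∀ i, 0 < u i := fun i => lt_of_lt_of_le ha (hua i)
  have huN : u N = 2 := by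
    rw [hudef]
    simp only []
    rw [hΔdef]
    field_simp
    ring
  refine ⟨4 * N * C / a, by positivity, fun g hg D hD => ?_⟩
  set τ : ℕ → ℝ := fun k => |B.c k g| with hτdef
  set σ : ℕ → ℝ := fun k => B.sg g k with hσdef
  have hτD : ∀ k ∈ D, a ≤ τ k ∧ τ k ≤ 1 := fun k hk => ⟨(hD k).1 hk, hg k⟩
  set ι : ℕ → ℕ := fun k => ⌊(τ k - a) / Δ⌋₊ with hιdef
  have hx0 : ∀ k ∈ D, 0 ≤ (τ k - a) / Δ := by
    intro k hk
    apply div_nonneg _ (le_of_lt hΔpos)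
    linarith [(hτD k hk).1]
  have hu1 : ∀ k ∈ D, u (ι k) ≤ τ k := by
    intro k hk
    have h1 : (ι k : ℝ) ≤ (τ k - a) / Δ := Nat.floor_le (hx0 k hk)
    have h2 : (ι k : ℝ) * Δ ≤ τ k - a := by
      rw [← div_mul_cancel₀ (τ k - a) (ne_of_gt hΔpos)]
      exact mul_le_mul_of_nonneg_right h1 (le_of_lt hΔpos)
    simp only [hudef]
    linarith
  have hu2 : ∀ k ∈ D, τ k < u (ι k + 1) := by
    intro k hk
    have h1 : (τ k - a) / Δ < ι k + 1 := Nat.lt_floor_add_one _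
    have h2 : τ k - a < ((ι k : ℝ) + 1) * Δ := by
      rw [← div_mul_cancel₀ (τ k - a) (ne_of_gt hΔpos)]
      exact mul_lt_mul_of_pos_right h1 hΔpos
    simp only [hudef]
    push_cast
    linarith
  have hιN : ∀ k ∈ D, ι k < N := by
    intro k hk
    rw [hιdef]
    simp only []
    rw [Nat.floor_lt (hx0 k hk), div_lt_iff₀ hΔpos]
    have h2 : (N:ℝ) * Δ = 2 - a := by
      rw [hΔdef]; field_simp
    rw [h2]
    linarith [(hτD k hk).2]
  -- the approximant y and remainder r
  set γ : ℕ → ℝ := fun k => B.c k g / u (ι k + 1) with hγdef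
  set y : X := ∑ k ∈ D, γ k • B.e k with hydef
  set r : X := ∑ k ∈ D, (σ k - γ k) • B.e k with hrdef
  set X0 : ℝ := ‖∑ k ∈ D, σ k • B.e k‖ with hX0def
  have hsum : ∑ k ∈ D, σ k • B.e k = y + r := by
    rw [hydef, hrdef, ← Finset.sum_add_distrib]
    exact Finset.sum_congr rfl fun k _ => by rw [← add_smul]; ring_nf
  -- remainder coefficients are small
  have hrc : ∀ k ∈ D, |σ k - γ k| ≤ Δ / a := by
    intro k hk
    have hcg : B.c k g = σ k * τ k := (B.sg_mul_abs g k).symm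
    have hup : 0 < u (ι k + 1) := hupos _
    have hγτ : γ k = σ k * (τ k / u (ι k + 1)) := by
      rw [hγdef]
      simp only []
      rw [hcg]
      ring
    have h1 : σ k - γ k = σ k * (1 - τ k / u (ι k + 1)) := by
      rw [hγτ]; ring
    have hτu : τ k / u (ι k + 1) ≤ 1 := by
      rw [div_le_one hup]
      exact le_of_lt (hu2 k hk)
    have hgap : u (ι k + 1) - τ k ≤ Δ := by
      have h3 := hu1 k hk
      simp only [hudef] at h3 ⊢
      push_cast
      linarith
    have h2 : 1 - τ k / u (ι k + 1) = (u (ι k + 1) - τ k) / u (ι k + 1) := by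
      field_simp
    rw [h1, abs_mul, B.abs_sg, one_mul, abs_of_nonneg (by linarith), h2]
    exact div_le_div₀ (le_of_lt hΔpos) hgap ha (hua _)
  -- remainder norm bound
  have hrnorm : ‖r‖ ≤ Δ / a * (2 * K * X0) := by
    have hΔa : 0 < Δ / a := by positivity
    have hrr : r = (Δ / a) • ∑ k ∈ D, ((σ k - γ k) * (a / Δ)) • B.e k := by
      rw [hrdef, Finset.smul_sum]
      refine Finset.sum_congr rfl fun k _ => ?_
      rw [smul_smul]
      congr 1
      field_simp
    have hb : ∀ k ∈ D, |(σ k - γ k) * (a / Δ)| ≤ 1 := by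
      intro k hk
      rw [abs_mul, abs_of_pos (by positivity : (0:ℝ) < a / Δ)]
      calc |σ k - γ k| * (a / Δ) ≤ Δ / a * (a / Δ) := by
            have := hrc k hk
            gcongr
      _ = 1 := by field_simp
    have hmb := B.mult_bound hK1 hp1 D σ (fun k _ => B.abs_sg g k)
      (fun k => (σ k - γ k) * (a / Δ)) hb
    rw [hrr, norm_smul, Real.norm_eq_abs, abs_of_pos hΔa]
    rw [← hX0def] at hmb
    exact mul_le_mul_of_nonneg_left hmb (le_of_lt hΔa)
  -- the y bound via layered thresholding
  set T : ℕ → Finset ℕ := fun i => D.filter (fun k => u i ≤ |B.c k g|) with hTdef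
  have hTthr : ∀ i, B.thrSet (u i) g (T i) := by
    intro i n
    rw [hTdef]
    simp only [Finset.mem_filter]
    constructor
    · exact fun h => h.2
    · intro h
      exact ⟨(hD n).2 (le_trans (hua i) h), h⟩
  have hTnorm : ∀ i, ‖B.S (T i) g‖ ≤ C * ‖g‖ := fun i =>
    hC g hg (u i) (hua i) (T i) (hTthr i)
  have hTsub : ∀ i, T (i + 1) ⊆ T i := by
    intro i k hk
    rw [hTdef] at hk ⊢
    simp only [Finset.mem_filter] at hk ⊢
    refine ⟨hk.1, le_trans ?_ hk.2⟩
    simp only [hudef]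
    push_cast
    have : (0:ℝ) ≤ Δ := le_of_lt hΔpos
    linarith
  have hfiber : ∀ i, D.filter (fun k => ι k = i) = T i \ T (i + 1) := by
    intro i
    ext k
    simp only [Finset.mem_filter, Finset.mem_sdiff, hTdef]
    constructor
    · rintro ⟨hkD, hki⟩
      refine ⟨⟨hkD, by rw [← hki]; exact hu1 k hkD⟩, ?_⟩
      rintro ⟨-, hk2⟩
      have := hu2 k hkD
      rw [hki] at this
      exact absurd hk2 (not_le.2 this)
    · rintro ⟨⟨hkD, hk1⟩, hk2⟩
      have hk2' : τ k < u (i + 1) := by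
        by_contra hcon
        exact hk2 ⟨hkD, not_lt.1 hcon⟩
      refine ⟨hkD, ?_⟩
      rw [hιdef]
      simp only []
      rw [Nat.floor_eq_iff (hx0 k hkD)]
      constructor
      · rw [le_div_iff₀ hΔpos]
        simp only [hudef] at hk1
        linarith
      · rw [div_lt_iff₀ hΔpos]
        simp only [hudef] at hk2'
        push_cast at hk2'
        linarith
  have hy2 : y = ∑ i ∈ Finset.range N, (u (i+1))⁻¹ • (B.S (T i) g - B.S (T (i+1)) g) := by
    rw [hydef, ← Finset.sum_fiberwise_of_maps_to (g := ι) (t := Finset.range N)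
      (fun k hk => Finset.mem_range.2 (hιN k hk))]
    refine Finset.sum_congr rfl fun i _ => ?_
    have h1 : ∑ k ∈ D.filter (fun k => ι k = i), γ k • B.e k
        = ∑ k ∈ D.filter (fun k => ι k = i), ((u (i+1))⁻¹ * B.c k g) • B.e k := by
      refine Finset.sum_congr rfl fun k hk => ?_
      have hki := (Finset.mem_filter.1 hk).2
      rw [hγdef]
      simp only []
      rw [hki, div_eq_inv_mul]
    rw [h1, hfiber i]
    have h2 : B.S (T i) g - B.S (T (i+1)) g = ∑ k ∈ T i \ T (i+1), B.c k g • B.e k := by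
      have := Finset.sum_sdiff (s₁ := T (i+1)) (s₂ := T i)
        (f := fun k => B.c k g • B.e k) (hTsub i)
      unfold S
      linear_combination (norm := module) -this
    rw [h2, Finset.smul_sum]
    exact Finset.sum_congr rfl fun k _ => by rw [smul_smul]
  have hynorm : ‖y‖ ≤ N * (2 * C / a) * ‖g‖ := by
    rw [hy2]
    calc ‖∑ i ∈ Finset.range N, (u (i+1))⁻¹ • (B.S (T i) g - B.S (T (i+1)) g)‖
        ≤ ∑ i ∈ Finset.range N, ‖(u (i+1))⁻¹ • (B.S (T i) g - B.S (T (i+1)) g)‖ :=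
          norm_sum_le _ _
    _ ≤ ∑ i ∈ Finset.range N, (2 * C / a) * ‖g‖ := by
        refine Finset.sum_le_sum fun i _ => ?_
        rw [norm_smul, Real.norm_eq_abs, abs_of_pos (inv_pos.2 (hupos (i+1)))]
        have hnn : ‖B.S (T i) g - B.S (T (i+1)) g‖ ≤ 2 * C * ‖g‖ := by
          calc ‖B.S (T i) g - B.S (T (i+1)) g‖
              ≤ ‖B.S (T i) g‖ + ‖B.S (T (i+1)) g‖ := norm_sub_le _ _
          _ ≤ C * ‖g‖ + C * ‖g‖ := add_le_add (hTnorm i) (hTnorm (i+1))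
          _ = 2 * C * ‖g‖ := by ring
        have hinva : (u (i+1))⁻¹ ≤ a⁻¹ := by
          apply inv_anti₀ ha (hua (i+1))
        calc (u (i+1))⁻¹ * ‖B.S (T i) g - B.S (T (i+1)) g‖
            ≤ a⁻¹ * (2 * C * ‖g‖) := by
              apply mul_le_mul hinva hnn (norm_nonneg _) (le_of_lt (inv_pos.2 ha))
        _ = 2 * C / a * ‖g‖ := by ring
    _ = N * (2 * C / a) * ‖g‖ := by
        rw [Finset.sum_const, Finset.card_range, nsmul_eq_mul]
        ring
  -- combine
  have hX0 : X0 ≤ ‖y‖ + ‖r‖ := by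
    rw [hX0def, hsum]
    exact norm_add_le _ _
  have hX0nn : 0 ≤ X0 := norm_nonneg _
  have hfin : X0 ≤ N * (2 * C / a) * ‖g‖ + 1/2 * X0 := by
    have h5 : Δ / a * (2 * K * X0) ≤ 1/2 * X0 := by
      have := mul_le_mul_of_nonneg_right hhalf hX0nn
      calc Δ / a * (2 * K * X0) = (Δ / a * (2 * K)) * X0 := by ring
      _ ≤ 1/2 * X0 := this
    linarith
  have : X0 ≤ 2 * (N * (2 * C / a)) * ‖g‖ := by linarith
  calc X0 ≤ 2 * (N * (2 * C / a)) * ‖g‖ := this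
  _ = 4 * N * C / a * ‖g‖ := by ring

end BBasis


namespace BBasis
variable {X : Type*} [NormedAddCommGroup X] [NormedSpace ℝ X] (B : BBasis X)

/-- the coefficient operator into ℓ₂, bounded thanks to the Hilbertian property -/
lemma exists_J
    (hHilb : ∃ C : ℝ, ∀ (A : Finset ℕ) (a : ℕ → ℝ),
      ‖∑ n ∈ A, a n • B.e n‖ ≤ C * (∑ n ∈ A, |a n| ^ (2 : ℝ)) ^ ((1 : ℝ) / 2)) :
    ∃ T : (X →L[ℝ] ℝ) →L[ℝ] lp (fun _ : ℕ => ℝ) 2,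
      ∀ (φ : X →L[ℝ] ℝ) (n : ℕ), T φ n = φ (B.e n) := by
  obtain ⟨C0, hC0⟩ := hHilb
  set CH : ℝ := max C0 0 + 1 with hCH
  have hCHpos : 0 < CH := by positivity
  have hC0CH : C0 ≤ CH := by rw [hCH]; linarith [le_max_left C0 (0:ℝ)]
  have key : ∀ (φ : X →L[ℝ] ℝ) (A : Finset ℕ),
      ∑ n ∈ A, |φ (B.e n)| ^ (2:ℝ) ≤ (CH * ‖φ‖) ^ (2:ℝ) := by
    intro φ A
    set t : ℝ := ∑ n ∈ A, |φ (B.e n)| ^ (2:ℝ) with htdef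
    have hrpow2 : ∀ x : ℝ, |x| ^ (2:ℝ) = x * x := by
      intro x
      rw [show (2:ℝ) = ((2:ℕ):ℝ) by norm_num, Real.rpow_natCast]
      rw [sq_abs]
      ring
    have ht0 : 0 ≤ t := by
      rw [htdef]
      exact Finset.sum_nonneg fun n _ => by rw [hrpow2]; exact mul_self_nonneg _
    have hKnn : 0 ≤ CH * ‖φ‖ := by positivity
    have hK2 : (CH * ‖φ‖) ^ (2:ℝ) = (CH * ‖φ‖) * (CH * ‖φ‖) := by
      rw [show (2:ℝ) = ((2:ℕ):ℝ) by norm_num, Real.rpow_natCast]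
      ring
    have ht : t = φ (∑ n ∈ A, φ (B.e n) • B.e n) := by
      rw [map_sum, htdef]
      exact Finset.sum_congr rfl fun n _ => by
        rw [map_smul, smul_eq_mul, hrpow2]
    have hb : ‖∑ n ∈ A, φ (B.e n) • B.e n‖ ≤ C0 * t ^ ((1:ℝ)/2) := hC0 A _
    have hth : 0 ≤ t ^ ((1:ℝ)/2) := Real.rpow_nonneg ht0 _
    have hchain : t ≤ (CH * ‖φ‖) * t ^ ((1:ℝ)/2) := by
      calc t = φ (∑ n ∈ A, φ (B.e n) • B.e n) := ht
      _ ≤ |φ (∑ n ∈ A, φ (B.e n) • B.e n)| := le_abs_self _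
      _ ≤ ‖φ‖ * ‖∑ n ∈ A, φ (B.e n) • B.e n‖ := by
          rw [← Real.norm_eq_abs]
          exact φ.le_opNorm _
      _ ≤ ‖φ‖ * (C0 * t ^ ((1:ℝ)/2)) := by
          apply mul_le_mul_of_nonneg_left hb (norm_nonneg _)
      _ ≤ (CH * ‖φ‖) * t ^ ((1:ℝ)/2) := by
          have h1 : ‖φ‖ * (C0 * t ^ ((1:ℝ)/2)) = (C0 * ‖φ‖) * t ^ ((1:ℝ)/2) := by ring
          rw [h1]
          apply mul_le_mul_of_nonneg_right _ hth
          apply mul_le_mul_of_nonneg_right hC0CH (norm_nonneg _)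
    rcases eq_or_lt_of_le ht0 with h | h
    · rw [← h, hK2]
      positivity
    · have hsq : t ^ ((1:ℝ)/2) * t ^ ((1:ℝ)/2) = t := by
        rw [← Real.rpow_add h]
        norm_num
      have hthpos : 0 < t ^ ((1:ℝ)/2) := Real.rpow_pos_of_pos h _
      have h1 : t ^ ((1:ℝ)/2) ≤ CH * ‖φ‖ := by
        have h2 : t ^ ((1:ℝ)/2) * t ^ ((1:ℝ)/2) ≤ (CH * ‖φ‖) * t ^ ((1:ℝ)/2) := by
          rw [hsq]; exact hchain
        exact le_of_mul_le_mul_right h2 hthpos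
      calc t = t ^ ((1:ℝ)/2) * t ^ ((1:ℝ)/2) := hsq.symm
      _ ≤ (CH * ‖φ‖) * (CH * ‖φ‖) := mul_le_mul h1 h1 (le_of_lt hthpos) hKnn
      _ = (CH * ‖φ‖) ^ (2:ℝ) := hK2.symm
  have key' : ∀ (φ : X →L[ℝ] ℝ) (A : Finset ℕ),
      ∑ n ∈ A, ‖φ (B.e n)‖ ^ ((2:ℝ≥0∞)).toReal ≤ (CH * ‖φ‖) ^ ((2:ℝ≥0∞)).toReal := by
    intro φ A
    have h2 : ((2:ℝ≥0∞)).toReal = (2:ℝ) := by simp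
    rw [h2]
    simpa only [Real.norm_eq_abs] using key φ A
  have mem : ∀ φ : X →L[ℝ] ℝ, Memℓp (fun n => φ (B.e n)) 2 := fun φ =>
    memℓp_gen' (key' φ)
  set L : (X →L[ℝ] ℝ) →ₗ[ℝ] lp (fun _ : ℕ => ℝ) 2 :=
    { toFun := fun φ => ⟨fun n => φ (B.e n), mem φ⟩
      map_add' := fun φ ψ => Subtype.ext (funext fun n => rfl)
      map_smul' := fun c φ => Subtype.ext (funext fun n => rfl) } with hL
  have hbound : ∀ φ : X →L[ℝ] ℝ, ‖L φ‖ ≤ CH * ‖φ‖ := by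
    intro φ
    apply lp.norm_le_of_forall_sum_le (by norm_num : 0 < ((2:ℝ≥0∞)).toReal)
      (by positivity : 0 ≤ CH * ‖φ‖)
    intro s
    exact key' φ s
  refine ⟨L.mkContinuous CH hbound, fun φ n => ?_⟩
  rfl

end BBasis


/-- a thresholding-bounded Hilbertian basis of a Banach space whose dual
is a GT space is equivalent to the unit vector basis of `c₀`. -/
theorem stmt11 {X : Type*} [NormedAddCommGroup X] [NormedSpace ℝ X] [CompleteSpace X]
    (B : BBasis X)
    (hHilb : ∃ C : ℝ, ∀ (A : Finset ℕ) (a : ℕ → ℝ),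
      ‖∑ n ∈ A, a n • B.e n‖ ≤ C * (∑ n ∈ A, |a n| ^ (2 : ℝ)) ^ ((1 : ℝ) / 2))
    (hThr : ∀ a ∈ Set.Ioo (0 : ℝ) 1, ∃ C : ℝ, ∀ f, B.inQ f →
      ∀ A : Finset ℕ, B.thrSet a f A → ‖B.S A f‖ ≤ C * ‖f‖)
    (hGT : IsGTSpace (X →L[ℝ] ℝ)) :
    B.EquivC0 := by
  classical
  obtain ⟨Mc0, hMc0⟩ := B.c_bdd
  set Mc : ℝ := max Mc0 1 with hMcdef
  have hMc1 : 1 ≤ Mc := le_max_right _ _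
  have hMcpos : 0 < Mc := by linarith
  have hMcb : ∀ n, ‖B.c n‖ ≤ Mc := fun n => (hMc0 n).trans (le_max_left _ _)
  have hcb : ∀ (n : ℕ) (y : X), |B.c n y| ≤ Mc * ‖y‖ := by
    intro n y
    calc |B.c n y| = ‖B.c n y‖ := (Real.norm_eq_abs _).symm
    _ ≤ ‖B.c n‖ * ‖y‖ := (B.c n).le_opNorm y
    _ ≤ Mc * ‖y‖ := by gcongr; exact hMcb n
  obtain ⟨T, hT⟩ := B.exists_J hHilb
  have hTc : ∀ k, 1 ≤ ‖T (B.c k)‖ := by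
    intro k
    have h1 := lp.norm_apply_le_norm (by norm_num : (2:ℝ≥0∞) ≠ 0) (T (B.c k)) k
    rw [hT (B.c k) k] at h1
    have h2 : B.c k (B.e k) = 1 := by rw [B.biorth]; simp
    rw [h2] at h1
    simpa using h1
  obtain ⟨C10, hC10⟩ := hGT T
  set C1 : ℝ := max C10 1 with hC1def
  have hC11 : 1 ≤ C1 := le_max_right _ _
  have hC1pos : 0 < C1 := by linarith
  have hC1prop : ∀ (A : Finset ℕ) (g : ℕ → X →L[ℝ] ℝ) (M : ℝ),
      (∀ ε : ℕ → ℝ, (∀ k ∈ A, |ε k| = 1) → ‖∑ k ∈ A, ε k • g k‖ ≤ M) →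
      ∑ k ∈ A, ‖T (g k)‖ ≤ C1 * M := by
    intro A g M hyp
    have hM0 : 0 ≤ M :=
      le_trans (norm_nonneg _) (hyp (fun _ => 1) (fun k _ => by norm_num))
    calc ∑ k ∈ A, ‖T (g k)‖ ≤ C10 * M := hC10 A g M hyp
    _ ≤ C1 * M := mul_le_mul_of_nonneg_right (le_max_left _ _) hM0
  set a : ℝ := (2 * C1 * Mc)⁻¹ with hadef
  have h2CM : (1:ℝ) < 2 * C1 * Mc := by nlinarith
  have ha : 0 < a := by rw [hadef]; exact inv_pos.2 (by linarith)
  have ha1 : a < 1 := by rw [hadef]; exact inv_lt_one_of_one_lt₀ h2CM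
  obtain ⟨K, hK1, hp1⟩ := B.p1 hThr
  have hK0 : (0:ℝ) ≤ K := le_trans zero_le_one hK1
  obtain ⟨K2, hK20, hl1⟩ := B.l1 hThr ha ha1
  set K3 : ℝ := 2 * K * (K * K2) with hK3def
  have hK30 : 0 ≤ K3 := by rw [hK3def]; positivity
  -- multiplier bounds on subsets of threshold sets at level a
  have hthrmult : ∀ g, B.inQ g → ∀ D : Finset ℕ, B.thrSet a g D →
      ∀ G : Finset ℕ, G ⊆ D → ∀ b : ℕ → ℝ, (∀ k ∈ G, |b k| ≤ 1) →
      ‖∑ k ∈ G, b k • B.e k‖ ≤ K3 * ‖g‖ := by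
    intro g hg D hD G hGD b hb
    have h1 := B.mult_bound hK1 hp1 G (B.sg g) (fun k _ => B.abs_sg g k) b hb
    have h2 := hp1 D G (B.sg g) (fun k _ => B.abs_sg g k) hGD
    have h3 := hl1 g hg D hD
    calc ‖∑ k ∈ G, b k • B.e k‖ ≤ 2 * K * ‖∑ k ∈ G, B.sg g k • B.e k‖ := h1
    _ ≤ 2 * K * (K * ‖∑ k ∈ D, B.sg g k • B.e k‖) := by
        apply mul_le_mul_of_nonneg_left h2 (by positivity)
    _ ≤ 2 * K * (K * (K2 * ‖g‖)) := by
        apply mul_le_mul_of_nonneg_left _ (by positivity)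
        apply mul_le_mul_of_nonneg_left h3 hK0
    _ = K3 * ‖g‖ := by rw [hK3def]; ring
  set Sfin : ℝ := 2 * C1 * K3 with hSdef
  have hSfin0 : 0 ≤ Sfin := by rw [hSdef]; positivity
  -- the key ℓ¹-estimate for the coefficients of dual functionals
  have hL : ∀ (A : Finset ℕ) (φ : X →L[ℝ] ℝ), ‖φ‖ ≤ 1 →
      ∑ k ∈ A, |φ (B.e k)| ≤ Sfin := by
    intro A φ hφ
    set L : ℝ := ∑ k ∈ A, |φ (B.e k)| with hLdef
    have hL0 : 0 ≤ L := Finset.sum_nonneg fun k _ => abs_nonneg _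
    -- uniform bound on the sign-sums of the weighted dual functionals
    have hM : ∀ ε : ℕ → ℝ, (∀ k ∈ A, |ε k| = 1) →
        ‖∑ k ∈ A, ε k • (φ (B.e k) • B.c k)‖ ≤ K3 + a * Mc * L := by
      intro ε hε
      apply ContinuousLinearMap.opNorm_le_bound _ (by positivity)
      intro y
      by_cases hy : y = 0
      · simp [hy]
      have hyn : 0 < ‖y‖ := norm_pos_iff.2 hy
      have hMcy : 0 < Mc * ‖y‖ := by positivity
      set g : X := (Mc * ‖y‖)⁻¹ • y with hgdef
      have hcy : ∀ k, B.c k y = (Mc * ‖y‖) * B.c k g := by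
        intro k
        rw [hgdef, map_smul, smul_eq_mul]
        field_simp
      have hcg : ∀ k, |B.c k g| = (Mc * ‖y‖)⁻¹ * |B.c k y| := by
        intro k
        rw [hgdef, map_smul, smul_eq_mul, abs_mul, abs_of_pos (inv_pos.2 hMcy)]
      have hginQ : B.inQ g := by
        intro n
        rw [hcg n]
        calc (Mc * ‖y‖)⁻¹ * |B.c n y| ≤ (Mc * ‖y‖)⁻¹ * (Mc * ‖y‖) := by
              apply mul_le_mul_of_nonneg_left (hcb n y) (le_of_lt (inv_pos.2 hMcy))
        _ = 1 := inv_mul_cancel₀ (ne_of_gt hMcy)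
      have hgnorm : ‖g‖ = Mc⁻¹ := by
        rw [hgdef, norm_smul, Real.norm_eq_abs, abs_of_pos (inv_pos.2 hMcy)]
        field_simp
      obtain ⟨D, hD⟩ := B.exists_thrSet g ha
      -- pointwise estimate
      have heval : (∑ k ∈ A, ε k • (φ (B.e k) • B.c k)) y
          = ∑ k ∈ A, ε k * (φ (B.e k) * B.c k y) := by
        rw [ContinuousLinearMap.sum_apply]
        exact Finset.sum_congr rfl fun k _ => by
          rw [ContinuousLinearMap.smul_apply, ContinuousLinearMap.smul_apply,
            smul_eq_mul, smul_eq_mul]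
      have habs : |(∑ k ∈ A, ε k • (φ (B.e k) • B.c k)) y|
          ≤ ∑ k ∈ A, |φ (B.e k)| * |B.c k y| := by
        rw [heval]
        calc |∑ k ∈ A, ε k * (φ (B.e k) * B.c k y)|
            ≤ ∑ k ∈ A, |ε k * (φ (B.e k) * B.c k y)| := Finset.abs_sum_le_sum_abs _ _
        _ = ∑ k ∈ A, |φ (B.e k)| * |B.c k y| := by
            refine Finset.sum_congr rfl fun k hk => ?_
            rw [abs_mul, hε k hk, one_mul, abs_mul]
      have hrescale : ∑ k ∈ A, |φ (B.e k)| * |B.c k y|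
          = (Mc * ‖y‖) * ∑ k ∈ A, |φ (B.e k)| * |B.c k g| := by
        rw [Finset.mul_sum]
        refine Finset.sum_congr rfl fun k _ => ?_
        rw [hcy k, abs_mul, abs_of_pos hMcy]
        ring
      have hsplit : ∑ k ∈ A, |φ (B.e k)| * |B.c k g|
          = ∑ k ∈ A ∩ D, |φ (B.e k)| * |B.c k g|
            + ∑ k ∈ A \ D, |φ (B.e k)| * |B.c k g| :=
        (Finset.sum_inter_add_sum_sdiff A D _).symm
      have hdiff : ∑ k ∈ A \ D, |φ (B.e k)| * |B.c k g| ≤ a * L := by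
        calc ∑ k ∈ A \ D, |φ (B.e k)| * |B.c k g|
            ≤ ∑ k ∈ A \ D, |φ (B.e k)| * a := by
              refine Finset.sum_le_sum fun k hk => ?_
              have hkD := (Finset.mem_sdiff.1 hk).2
              have : ¬ (a ≤ |B.c k g|) := fun h => hkD ((hD k).2 h)
              exact mul_le_mul_of_nonneg_left (le_of_lt (not_le.1 this)) (abs_nonneg _)
        _ = a * ∑ k ∈ A \ D, |φ (B.e k)| := by rw [← Finset.sum_mul]; ring
        _ ≤ a * L := by
              apply mul_le_mul_of_nonneg_left _ (le_of_lt ha)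
              rw [hLdef]
              exact Finset.sum_le_sum_of_subset_of_nonneg (Finset.sdiff_subset)
                (fun k _ _ => abs_nonneg _)
      have hinter : ∑ k ∈ A ∩ D, |φ (B.e k)| * |B.c k g| ≤ K3 * Mc⁻¹ := by
        set η : ℕ → ℝ := fun k => if 0 ≤ φ (B.e k) then 1 else -1 with hηdef
        have hηabs : ∀ k, η k * φ (B.e k) = |φ (B.e k)| := by
          intro k
          simp only [hηdef]
          rcases le_or_gt 0 (φ (B.e k)) with h | h
          · rw [if_pos h, one_mul, abs_of_nonneg h]
          · rw [if_neg (not_le.2 h), abs_of_neg h]; ring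
        set b : ℕ → ℝ := fun k => η k * |B.c k g| with hbdef
        have hb1 : ∀ k ∈ A ∩ D, |b k| ≤ 1 := by
          intro k _
          rw [hbdef]
          simp only []
          rw [abs_mul]
          have hη1 : |η k| = 1 := by
            simp only [hηdef]; split <;> simp
          rw [hη1, one_mul, abs_abs]
          exact hginQ k
        have hid : ∑ k ∈ A ∩ D, |φ (B.e k)| * |B.c k g|
            = φ (∑ k ∈ A ∩ D, b k • B.e k) := by
          rw [map_sum]
          refine Finset.sum_congr rfl fun k _ => ?_
          have h5 : φ (b k • B.e k) = (η k * |B.c k g|) * φ (B.e k) := by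
            rw [map_smul, smul_eq_mul]
            try simp only [hbdef]
          have h6 : |φ (B.e k)| = η k * φ (B.e k) := (hηabs k).symm
          rw [h5, h6]
          ring
        rw [hid]
        have hnb := hthrmult g hginQ D hD (A ∩ D) (Finset.inter_subset_right) b hb1
        calc φ (∑ k ∈ A ∩ D, b k • B.e k)
            ≤ |φ (∑ k ∈ A ∩ D, b k • B.e k)| := le_abs_self _
        _ ≤ ‖φ‖ * ‖∑ k ∈ A ∩ D, b k • B.e k‖ := by
            rw [← Real.norm_eq_abs]; exact φ.le_opNorm _
        _ ≤ 1 * (K3 * ‖g‖) := by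
            apply mul_le_mul hφ hnb (norm_nonneg _) zero_le_one
        _ = K3 * Mc⁻¹ := by rw [one_mul, hgnorm]
      calc |(∑ k ∈ A, ε k • (φ (B.e k) • B.c k)) y|
          ≤ ∑ k ∈ A, |φ (B.e k)| * |B.c k y| := habs
      _ = (Mc * ‖y‖) * ∑ k ∈ A, |φ (B.e k)| * |B.c k g| := hrescale
      _ ≤ (Mc * ‖y‖) * (K3 * Mc⁻¹ + a * L) := by
          apply mul_le_mul_of_nonneg_left _ (le_of_lt hMcy)
          rw [hsplit]
          exact add_le_add hinter hdiff
      _ = (K3 + a * Mc * L) * ‖y‖ := by field_simp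
    have hGTres := hC1prop A (fun k => φ (B.e k) • B.c k) (K3 + a * Mc * L) hM
    have hlow : L ≤ ∑ k ∈ A, ‖T (φ (B.e k) • B.c k)‖ := by
      rw [hLdef]
      refine Finset.sum_le_sum fun k _ => ?_
      rw [map_smul, norm_smul, Real.norm_eq_abs]
      calc |φ (B.e k)| = |φ (B.e k)| * 1 := (mul_one _).symm
      _ ≤ |φ (B.e k)| * ‖T (B.c k)‖ :=
          mul_le_mul_of_nonneg_left (hTc k) (abs_nonneg _)
    have hhalf : C1 * (a * Mc * L) = L / 2 := by
      rw [hadef]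
      field_simp
    have hfin : L ≤ C1 * K3 + L / 2 := by
      have := le_trans hlow hGTres
      calc L ≤ C1 * (K3 + a * Mc * L) := this
      _ = C1 * K3 + C1 * (a * Mc * L) := by ring
      _ = C1 * K3 + L / 2 := by rw [hhalf]
    have : L ≤ 2 * C1 * K3 := by linarith
    rw [← hSdef] at this
    exact this
  -- bound for sign vectors
  have hsgn : ∀ (A : Finset ℕ) (ε : ℕ → ℝ), (∀ k ∈ A, ε k = 1 ∨ ε k = -1) →
      ‖∑ k ∈ A, ε k • B.e k‖ ≤ Sfin := by
    intro A ε hε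
    by_cases hv : (∑ k ∈ A, ε k • B.e k) = 0
    · rw [hv, norm_zero]; exact hSfin0
    obtain ⟨φ, hφ1, hφv⟩ := exists_dual_vector ℝ _ (norm_ne_zero_iff.2 hv)
    have hφv' : φ (∑ k ∈ A, ε k • B.e k) = ‖∑ k ∈ A, ε k • B.e k‖ := by
      simpa using hφv
    calc ‖∑ k ∈ A, ε k • B.e k‖ = φ (∑ k ∈ A, ε k • B.e k) := hφv'.symm
    _ = ∑ k ∈ A, ε k * φ (B.e k) := by
        rw [map_sum]
        exact Finset.sum_congr rfl fun k _ => by rw [map_smul, smul_eq_mul]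
    _ ≤ ∑ k ∈ A, |φ (B.e k)| := by
        refine Finset.sum_le_sum fun k hk => ?_
        calc ε k * φ (B.e k) ≤ |ε k * φ (B.e k)| := le_abs_self _
        _ = |φ (B.e k)| := by
            rw [abs_mul]
            rcases hε k hk with h | h <;> rw [h] <;> simp
    _ ≤ Sfin := hL A φ (le_of_eq hφ1)
  -- conclusion
  refine ⟨Mc⁻¹, Sfin, inv_pos.2 hMcpos, fun A hA aa => ⟨?_, ?_⟩⟩
  · -- lower estimate
    have h1 : ∀ n ∈ A, |aa n| ≤ Mc * ‖∑ k ∈ A, aa k • B.e k‖ := by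
      intro n hn
      have h2 : B.c n (∑ k ∈ A, aa k • B.e k) = aa n := by
        rw [B.c_sum, if_pos hn]
      calc |aa n| = |B.c n (∑ k ∈ A, aa k • B.e k)| := by rw [h2]
      _ ≤ Mc * ‖∑ k ∈ A, aa k • B.e k‖ := hcb n _
    have h2 : A.sup' hA (fun n => |aa n|) ≤ Mc * ‖∑ n ∈ A, aa n • B.e n‖ :=
      Finset.sup'_le hA _ h1
    calc Mc⁻¹ * A.sup' hA (fun n => |aa n|)
        ≤ Mc⁻¹ * (Mc * ‖∑ n ∈ A, aa n • B.e n‖) := by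
          apply mul_le_mul_of_nonneg_left h2 (le_of_lt (inv_pos.2 hMcpos))
    _ = ‖∑ n ∈ A, aa n • B.e n‖ := by field_simp
  · -- upper estimate
    set μ : ℝ := A.sup' hA (fun n => |aa n|) with hμdef
    have hμ0 : 0 ≤ μ := by
      obtain ⟨n0, hn0⟩ := hA
      exact le_trans (abs_nonneg (aa n0)) (Finset.le_sup' (fun n => |aa n|) hn0)
    rcases eq_or_lt_of_le hμ0 with h | h
    · have hz : ∀ n ∈ A, aa n = 0 := by
        intro n hn
        have : |aa n| ≤ μ := Finset.le_sup' (fun n => |aa n|) hn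
        rw [← h] at this
        exact abs_eq_zero.1 (le_antisymm this (abs_nonneg _))
      rw [Finset.sum_eq_zero (fun n hn => by rw [hz n hn, zero_smul]), norm_zero,
        ← h, mul_zero]
    · have hb : ∀ k ∈ A, |aa k / μ| ≤ 1 := by
        intro k hk
        rw [abs_div, abs_of_pos h, div_le_one h]
        exact Finset.le_sup' (fun n => |aa n|) hk
      have hconv := B.conv A Sfin (fun k => aa k / μ) 0
        (fun ε hε => by rw [zero_add]; exact hsgn A ε hε) hb
      rw [zero_add] at hconv
      have hsum : ∑ n ∈ A, aa n • B.e n = μ • ∑ n ∈ A, (aa n / μ) • B.e n := by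
        rw [Finset.smul_sum]
        refine Finset.sum_congr rfl fun n _ => ?_
        rw [smul_smul]
        congr 1
        field_simp
      rw [hsum, norm_smul, Real.norm_eq_abs, abs_of_pos h]
      calc μ * ‖∑ n ∈ A, (aa n / μ) • B.e n‖ ≤ μ * Sfin :=
          mul_le_mul_of_nonneg_left hconv hμ0
      _ = Sfin * μ := mul_comm _ _
end
end

section
/- Let $\mathbb{X}$ be a $p$-Banach space, $0<p\le1$, with a basis satisfying, for some constants: (i) for each finite $A$ and unimodular signs $\varepsilon$, and each subset $B\subseteq A$, $\|1_{\varepsilon,B}\|\le K\|1_{\varepsilon,A}\|$ (SUCC with constant $K$). Then there is a constant $C$, depending only on $p$ and $K$, such that $\|\sum_{n\in A}a_n x_n\|\le C\max_{n\in A}|a_n|\,\|1_{\varepsilon,A}\|$ for all finite $A$, all scalars $(a_n)_{n\in A}$, and all unimodular $\varepsilon\in\mathcal{E}_A$ with $\varepsilon_n=\mathrm{sgn}(a_n)$ when $a_n\ne 0$. -/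
open Finset Set

/-!
Write each `|aₙ| / (2 max |a|)` in binary. Then `∑ aₙ xₙ` is `2 max |a|` times
`∑_{k<N} 2⁻⁽ᵏ⁺¹⁾ 1_{ε,A_k}` plus a remainder whose coefficients are below `2⁻ᴺ`, where `A_k` is
the set of indices whose `k`-th digit is `1`. By SUCC every `1_{ε,A_k}` (and every single `εₙ xₙ`)
has quasi-norm at most `K ‖1_{ε,A}‖`, and `p`-subadditivity turns the digit sum into the geometric
series `∑ 2^{-(k+1)p} ≤ 1 / (2^p - 1)`. Letting `N → ∞` gives `C = 2 K (2^p - 1)^{-1/p}`.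
-/

/-- The binary digit of `x` in the place of `2⁻⁽ᵏ⁺¹⁾`. -/
noncomputable def binaryDigit (k : ℕ) (x : ℝ) : ℤ := ⌊2 ^ (k + 1) * x⌋ - 2 * ⌊2 ^ k * x⌋

lemma binaryDigit_eq_zero_or_one (k : ℕ) (x : ℝ) :
    binaryDigit k x = 0 ∨ binaryDigit k x = 1 := by
  have h₁ : 2 * ⌊2 ^ k * x⌋ ≤ ⌊2 ^ (k + 1) * x⌋ := by
    rw [Int.le_floor, pow_succ]
    push_cast
    nlinarith [Int.floor_le ((2 : ℝ) ^ k * x)]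
  have h₂ : ⌊2 ^ (k + 1) * x⌋ < 2 * ⌊2 ^ k * x⌋ + 2 := by
    rw [Int.floor_lt, pow_succ]
    push_cast
    nlinarith [Int.lt_floor_add_one ((2 : ℝ) ^ k * x)]
  unfold binaryDigit
  omega

lemma sum_binaryDigit_div_two_pow {x : ℝ} (hx : x ∈ Set.Ico 0 1) (N : ℕ) :
    ∑ k ∈ range N, (binaryDigit k x : ℝ) / 2 ^ (k + 1) = ⌊2 ^ N * x⌋ / 2 ^ N := by
  have htelescope : ∀ k, (binaryDigit k x : ℝ) / 2 ^ (k + 1)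
      = ⌊2 ^ (k + 1) * x⌋ / 2 ^ (k + 1) - ⌊2 ^ k * x⌋ / 2 ^ k := by
    intro k
    simp only [binaryDigit]
    push_cast
    field_simp
    ring
  rw [sum_congr rfl fun k _ => htelescope k, sum_range_sub (fun k => (⌊2 ^ k * x⌋ : ℝ) / 2 ^ k)]
  simp [Int.floor_eq_zero_iff.2 hx]

lemma sub_floor_div_two_pow_mem_Icc (x : ℝ) (N : ℕ) :
    x - ⌊2 ^ N * x⌋ / 2 ^ N ∈ Set.Icc 0 ((2 : ℝ) ^ N)⁻¹ := by
  have h2N : (0 : ℝ) < 2 ^ N := by positivity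
  constructor
  · rw [sub_nonneg, div_le_iff₀ h2N]
    linarith [Int.floor_le ((2 : ℝ) ^ N * x)]
  · rw [sub_le_iff_le_add, inv_eq_one_div, ← add_div, le_div_iff₀ h2N]
    linarith [Int.lt_floor_add_one ((2 : ℝ) ^ N * x)]

lemma sum_smul_eq_binary_expansion {X : Type*} [AddCommGroup X] [Module ℝ X]
    (A : Finset ℕ) {b : ℕ → ℝ} (hb : ∀ n ∈ A, b n ∈ Set.Ico 0 1) (x : ℕ → X) (N : ℕ) :
    ∑ n ∈ A, b n • x n =
      ∑ k ∈ range N, ((2 : ℝ) ^ (k + 1))⁻¹ • ∑ n ∈ A with binaryDigit k (b n) = 1, x n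
        + ∑ n ∈ A, (b n - ⌊2 ^ N * b n⌋ / 2 ^ N) • x n := by
  have hdigits : ∀ k, ((2 : ℝ) ^ (k + 1))⁻¹ • ∑ n ∈ A with binaryDigit k (b n) = 1, x n
      = ∑ n ∈ A, ((binaryDigit k (b n) : ℝ) / 2 ^ (k + 1)) • x n := by
    intro k
    rw [sum_filter, smul_sum]
    refine sum_congr rfl fun n _ => ?_
    rcases binaryDigit_eq_zero_or_one k (b n) with h | h <;> simp [h, div_eq_inv_mul]
  simp only [hdigits]
  rw [sum_comm, ← sum_add_distrib]
  refine sum_congr rfl fun n hn => ?_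
  rw [← sum_smul, ← add_smul, sum_binaryDigit_div_two_pow (hb n hn), add_sub_cancel]

lemma sum_range_inv_two_pow_rpow_le {p : ℝ} (hp : 0 < p) (N : ℕ) :
    ∑ k ∈ range N, (((2 : ℝ) ^ (k + 1))⁻¹) ^ p ≤ ((2 : ℝ) ^ p - 1)⁻¹ := by
  set r : ℝ := ((2 : ℝ) ^ p)⁻¹
  have h2p : 1 < (2 : ℝ) ^ p := Real.one_lt_rpow (by norm_num) hp
  have hr : r < 1 := inv_lt_one_of_one_lt₀ h2p
  have hpow : ∀ k : ℕ, (((2 : ℝ) ^ k)⁻¹) ^ p = r ^ k := fun k => by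
    rw [Real.inv_rpow (by positivity), ← Real.rpow_natCast, ← Real.rpow_mul zero_le_two, mul_comm,
      Real.rpow_mul zero_le_two, Real.rpow_natCast, inv_pow]
  calc ∑ k ∈ range N, (((2 : ℝ) ^ (k + 1))⁻¹) ^ p = ∑ k ∈ Ico 1 (N + 1), r ^ k := by
        simp only [hpow, sum_Ico_eq_sum_range, add_tsub_cancel_right, add_comm 1]
    _ ≤ r ^ 1 / (1 - r) := geom_sum_Ico_le_of_lt_one (by positivity) hr
    _ = ((2 : ℝ) ^ p - 1)⁻¹ := by
        have : (2 : ℝ) ^ p - 1 ≠ 0 := by linarith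
        simp only [r]
        field_simp

section PNorm

variable {X : Type*} [AddCommGroup X] [Module ℝ X] {q : X → ℝ} {p : ℝ}

structure IsPNorm (p : ℝ) (q : X → ℝ) : Prop where
  nonneg : ∀ f, 0 ≤ q f
  smul : ∀ (t : ℝ) f, q (t • f) = |t| * q f
  rpow_add_le : ∀ f g, q (f + g) ^ p ≤ q f ^ p + q g ^ p

lemma IsPNorm.map_zero (hq : IsPNorm p q) : q 0 = 0 := by
  simpa using hq.smul 0 0

lemma rpow_map_sum_le_sum_rpow (hq : IsPNorm p q) (hp : 0 < p) {ι : Type*} (s : Finset ι)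
    (g : ι → X) :
    q (∑ i ∈ s, g i) ^ p ≤ ∑ i ∈ s, q (g i) ^ p := by
  classical
  induction s using Finset.induction with
  | empty => simp [hq.map_zero, Real.zero_rpow hp.ne']
  | insert i s hi ih =>
    rw [sum_insert hi, sum_insert hi]
    linarith [hq.rpow_add_le (g i) (∑ j ∈ s, g j)]

lemma rpow_map_smul_le (hq : IsPNorm p q) (hp : 0 < p) {t c L : ℝ} {f : X} (ht : |t| ≤ c)
    (hf : q f ≤ L) : q (t • f) ^ p ≤ c ^ p * L ^ p := by
  rw [← Real.mul_rpow ((abs_nonneg t).trans ht) ((hq.nonneg f).trans hf), hq.smul]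
  exact Real.rpow_le_rpow (mul_nonneg (abs_nonneg t) (hq.nonneg f))
    (mul_le_mul ht hf (hq.nonneg f) ((abs_nonneg t).trans ht)) hp.le

lemma rpow_map_sum_smul_le_of_mem_Ico (hq : IsPNorm p q) (hp : 0 < p) {A : Finset ℕ}
    {b : ℕ → ℝ} (hb : ∀ n ∈ A, b n ∈ Set.Ico 0 1) {x : ℕ → X} {L : ℝ}
    (hx : ∀ A' ⊆ A, q (∑ n ∈ A', x n) ≤ L) (N : ℕ) :
    q (∑ n ∈ A, b n • x n) ^ p ≤
      L ^ p * (((2 : ℝ) ^ p - 1)⁻¹ + #A * (((2 : ℝ) ^ N)⁻¹) ^ p) := by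
  have hdigits : ∀ k ∈ range N,
      q (((2 : ℝ) ^ (k + 1))⁻¹ • ∑ n ∈ A with binaryDigit k (b n) = 1, x n) ^ p
        ≤ (((2 : ℝ) ^ (k + 1))⁻¹) ^ p * L ^ p := fun k _ =>
    rpow_map_smul_le hq hp (abs_of_pos (by positivity)).le (hx _ (filter_subset _ _))
  have hremainder : ∀ n ∈ A,
      q ((b n - ⌊2 ^ N * b n⌋ / 2 ^ N) • x n) ^ p ≤ (((2 : ℝ) ^ N)⁻¹) ^ p * L ^ p := by
    intro n hn
    obtain ⟨h₀, h₁⟩ := sub_floor_div_two_pow_mem_Icc (b n) N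
    refine rpow_map_smul_le hq hp ((abs_of_nonneg h₀).trans_le h₁) ?_
    simpa using hx {n} (singleton_subset_iff.2 hn)
  rw [sum_smul_eq_binary_expansion A hb x N]
  calc _ ≤ q (∑ k ∈ range N,
            ((2 : ℝ) ^ (k + 1))⁻¹ • ∑ n ∈ A with binaryDigit k (b n) = 1, x n) ^ p
          + q (∑ n ∈ A, (b n - ⌊2 ^ N * b n⌋ / 2 ^ N) • x n) ^ p := hq.rpow_add_le _ _
    _ ≤ ∑ k ∈ range N, (((2 : ℝ) ^ (k + 1))⁻¹) ^ p * L ^ p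
          + ∑ n ∈ A, (((2 : ℝ) ^ N)⁻¹) ^ p * L ^ p := by
        gcongr
        · exact (rpow_map_sum_le_sum_rpow hq hp _ _).trans (sum_le_sum hdigits)
        · exact (rpow_map_sum_le_sum_rpow hq hp _ _).trans (sum_le_sum hremainder)
    _ ≤ L ^ p * (((2 : ℝ) ^ p - 1)⁻¹ + #A * (((2 : ℝ) ^ N)⁻¹) ^ p) := by
        have hL : 0 ≤ L ^ p := Real.rpow_nonneg ((hq.nonneg _).trans (hx ∅ (empty_subset _))) p
        rw [← sum_mul, sum_const, nsmul_eq_mul]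
        nlinarith [sum_range_inv_two_pow_rpow_le hp N]

lemma map_sum_smul_le_of_mem_Ico (hq : IsPNorm p q) (hp : 0 < p) {A : Finset ℕ} {b : ℕ → ℝ}
    (hb : ∀ n ∈ A, b n ∈ Set.Ico 0 1) {x : ℕ → X} {L : ℝ}
    (hx : ∀ A' ⊆ A, q (∑ n ∈ A', x n) ≤ L) :
    q (∑ n ∈ A, b n • x n) ≤ ((2 : ℝ) ^ p - 1) ^ (-p⁻¹) * L := by
  have hL : 0 ≤ L := (hq.nonneg _).trans (hx ∅ (empty_subset _))
  have h2p : 0 < (2 : ℝ) ^ p - 1 := by linarith [Real.one_lt_rpow (by norm_num : (1 : ℝ) < 2) hp]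
  have hlim : Filter.Tendsto
      (fun N : ℕ => L ^ p * (((2 : ℝ) ^ p - 1)⁻¹ + #A * (((2 : ℝ) ^ N)⁻¹) ^ p))
      Filter.atTop (nhds (L ^ p * (((2 : ℝ) ^ p - 1)⁻¹ + #A * 0))) := by
    have hpow : Filter.Tendsto (fun N : ℕ => (((2 : ℝ) ^ N)⁻¹) ^ p) Filter.atTop (nhds 0) := by
      have h := (Real.continuousAt_rpow_const 0 p (Or.inr hp.le)).tendsto.comp
        (tendsto_inv_atTop_zero.comp (tendsto_pow_atTop_atTop_of_one_lt one_lt_two))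
      rwa [Real.zero_rpow hp.ne'] at h
    exact ((hpow.const_mul _).const_add _).const_mul _
  have hp_pow : q (∑ n ∈ A, b n • x n) ^ p ≤ (((2 : ℝ) ^ p - 1) ^ (-p⁻¹) * L) ^ p := by
    rw [Real.mul_rpow (by positivity) hL, ← Real.rpow_mul h2p.le, neg_mul, inv_mul_cancel₀ hp.ne',
      Real.rpow_neg_one, mul_comm]
    simpa using ge_of_tendsto' hlim (rpow_map_sum_smul_le_of_mem_Ico hq hp hb hx)
  exact (Real.rpow_le_rpow_iff (hq.nonneg _) (by positivity) hp).1 hp_pow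

lemma map_sum_smul_le_of_mem_Icc (hq : IsPNorm p q) (hp : 0 < p) {A : Finset ℕ} {b : ℕ → ℝ}
    {M : ℝ} (hM : 0 ≤ M) (hb : ∀ n ∈ A, b n ∈ Set.Icc 0 M) {x : ℕ → X} {L : ℝ}
    (hx : ∀ A' ⊆ A, q (∑ n ∈ A', x n) ≤ L) :
    q (∑ n ∈ A, b n • x n) ≤ 2 * ((2 : ℝ) ^ p - 1) ^ (-p⁻¹) * M * L := by
  have hL : 0 ≤ L := hq.map_zero ▸ hx ∅ (empty_subset _)
  have h2p : 0 < (2 : ℝ) ^ p - 1 := by linarith [Real.one_lt_rpow (by norm_num : (1 : ℝ) < 2) hp]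
  obtain rfl | hM := hM.eq_or_lt
  · rw [sum_eq_zero fun n hn => by simp [le_antisymm (hb n hn).2 (hb n hn).1], hq.map_zero]
    simp
  have hscaled : ∀ n ∈ A, b n / (2 * M) ∈ Set.Ico 0 1 := fun n hn =>
    ⟨by have := (hb n hn).1; positivity, by rw [div_lt_one (by positivity)]; linarith [(hb n hn).2]⟩
  have hrescale : ∑ n ∈ A, b n • x n = (2 * M) • ∑ n ∈ A, (b n / (2 * M)) • x n := by
    rw [smul_sum]
    exact sum_congr rfl fun n _ => by rw [smul_smul, mul_div_cancel₀ _ (by positivity)]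
  calc q (∑ n ∈ A, b n • x n) = 2 * M * q (∑ n ∈ A, (b n / (2 * M)) • x n) := by
        rw [hrescale, hq.smul, abs_of_pos (by positivity)]
    _ ≤ 2 * M * (((2 : ℝ) ^ p - 1) ^ (-p⁻¹) * L) := by
        gcongr
        exact map_sum_smul_le_of_mem_Ico hq hp hscaled hx
    _ = _ := by ring

end PNorm

lemma abs_mul_real_sign (x : ℝ) : |x| * Real.sign x = x := by
  rcases lt_trichotomy x 0 with h | rfl | h
  · rw [Real.sign_of_neg h, abs_of_neg h]; ring
  · simp
  · rw [Real.sign_of_pos h, abs_of_pos h]; ring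

/-- if a basis of a `p`-Banach space, `0 < p ≤ 1`, is SUCC with
constant `K`, then there is `C = C(p, K)` such that
`‖∑_{n∈A} a_n e_n‖ ≤ C max_{n∈A} |a_n| ‖1_{ε,A}‖` whenever `ε ∈ 𝓔_A` satisfies
`ε_n = sgn a_n` for `a_n ≠ 0`. -/
theorem stmt13 :
    ∀ p K : ℝ, 0 < p → p ≤ 1 → ∃ C : ℝ, 0 < C ∧
      ∀ (X : Type) (_ : AddCommGroup X) (_ : Module ℝ X) (B : QBasis X),
        (∀ f g, B.q (f + g) ^ p ≤ B.q f ^ p + B.q g ^ p) →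
        (∀ (A : Finset ℕ) (ε : ℕ → ℝ), (∀ n ∈ A, |ε n| = 1) → ∀ A' ⊆ A,
          B.q (∑ n ∈ A', ε n • B.e n) ≤ K * B.q (∑ n ∈ A, ε n • B.e n)) →
        ∀ (A : Finset ℕ) (hA : A.Nonempty) (a ε : ℕ → ℝ),
          (∀ n ∈ A, |ε n| = 1) → (∀ n ∈ A, a n ≠ 0 → ε n = Real.sign (a n)) →
          B.q (∑ n ∈ A, a n • B.e n) ≤
            C * (A.sup' hA fun n => |a n|) * B.q (∑ n ∈ A, ε n • B.e n) := by
  intro p K hp _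
  have h2p : 0 < (2 : ℝ) ^ p - 1 := by linarith [Real.one_lt_rpow (by norm_num : (1 : ℝ) < 2) hp]
  refine ⟨2 * ((2 : ℝ) ^ p - 1) ^ (-p⁻¹) * max K 1, by positivity, ?_⟩
  intro X _ _ B hadd hsucc A hA a ε hε hsign
  set M := A.sup' hA fun n => |a n|
  have hcoef : ∀ n ∈ A, a n • B.e n = |a n| • ε n • B.e n := fun n _ => by
    rw [smul_smul]
    by_cases ha : a n = 0
    · simp [ha]
    · rw [hsign n ‹_› ha, abs_mul_real_sign]
  have hsucc' : ∀ A' ⊆ A,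
      B.q (∑ n ∈ A', ε n • B.e n) ≤ max K 1 * B.q (∑ n ∈ A, ε n • B.e n) :=
    fun A' hA' => (hsucc A ε hε A' hA').trans (by gcongr; exacts [B.q_nonneg _, le_max_left _ _])
  have hM : 0 ≤ M := (abs_nonneg _).trans (le_sup' (fun n => |a n|) hA.choose_spec)
  rw [sum_congr rfl hcoef]
  calc _ ≤ 2 * ((2 : ℝ) ^ p - 1) ^ (-p⁻¹) * M * (max K 1 * B.q (∑ n ∈ A, ε n • B.e n)) :=
        map_sum_smul_le_of_mem_Icc ⟨B.q_nonneg, B.q_smul, hadd⟩ hp hM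
          (fun n hn => ⟨abs_nonneg _, le_sup' (fun n => |a n|) hn⟩) hsucc'
    _ = _ := by ring
end
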